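/- arXiv:1802.03160 — 12 statements merged into one kernel-verified Lean document; each statement's English description precedes it below -/
import Mathlib

section
/- In the directed graph G(ℓ,β), for all indices 1 ≤ i, r ≤ ℓ and 1 ≤ j, s ≤ β: if at least one of the edges (x¹_i, x²_r), (y¹_i, y²_r) is present in G(ℓ,β), then there is a directed path of length 5 from x_{ij} to y_{rs} that contains no edge of D. -/
namespace Spanner

/-- Vertices of the graph `G(ℓ,β)`. -/
inductive V : Type
  | x1 : ℕ → V
  | x2 : ℕ → V
  | y1 : ℕ → V
  | y2 : ℕ → V
  | y3 : ℕ → V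
  | xx : ℕ → ℕ → V
  | yy : ℕ → ℕ → V
  deriving DecidableEq

/-- The directed edges of the graph `G(ℓ,β)` (with input strings `a`, `b`,
where `a i j = true` means `a_{ij} = 1`). -/
def Edge (ℓ β : ℕ) (a b : ℕ → ℕ → Bool) : V → V → Prop := fun u w =>
  (∃ i, 1 ≤ i ∧ i ≤ ℓ ∧ u = V.x1 i ∧ w = V.y1 i) ∨
  (∃ i, 1 ≤ i ∧ i ≤ ℓ ∧ u = V.x2 i ∧ w = V.y2 i) ∨
  (∃ i j r s, 1 ≤ i ∧ i ≤ ℓ ∧ 1 ≤ r ∧ r ≤ ℓ ∧ 1 ≤ j ∧ j ≤ β ∧ 1 ≤ s ∧ s ≤ β ∧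
    u = V.xx i j ∧ w = V.yy r s) ∨
  (∃ i j, 1 ≤ i ∧ i ≤ ℓ ∧ 1 ≤ j ∧ j ≤ β ∧ u = V.xx i j ∧ w = V.x1 i) ∨
  (∃ i j, 1 ≤ i ∧ i ≤ ℓ ∧ 1 ≤ j ∧ j ≤ β ∧ u = V.y3 i ∧ w = V.yy i j) ∨
  (∃ i, 1 ≤ i ∧ i ≤ ℓ ∧ u = V.y2 i ∧ w = V.y3 i) ∨
  (∃ i j, 1 ≤ i ∧ i ≤ ℓ ∧ 1 ≤ j ∧ j ≤ ℓ ∧ a i j = false ∧ u = V.x1 i ∧ w = V.x2 j) ∨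
  (∃ i j, 1 ≤ i ∧ i ≤ ℓ ∧ 1 ≤ j ∧ j ≤ ℓ ∧ b i j = false ∧ u = V.y1 i ∧ w = V.y2 j)

/-- Membership in the dense bipartite part `D` of `G(ℓ,β)`. -/
def InD (ℓ β : ℕ) : V → V → Prop := fun u w =>
  ∃ i j r s, 1 ≤ i ∧ i ≤ ℓ ∧ 1 ≤ r ∧ r ≤ ℓ ∧ 1 ≤ j ∧ j ≤ β ∧ 1 ≤ s ∧ s ≤ β ∧
    u = V.xx i j ∧ w = V.yy r s

/-- A directed walk of a given length with all edges satisfying `E`. -/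
inductive Walk (E : V → V → Prop) : V → V → ℕ → Prop
  | nil (v : V) : Walk E v v 0
  | cons {u v w : V} {n : ℕ} : E u v → Walk E v w n → Walk E u w (n + 1)

/-- If one of the edges `(x¹_i, x²_r)`, `(y¹_i, y²_r)` is present in
`G(ℓ,β)`, then there is a directed path of length 5 from `x_{ij}` to `y_{rs}` that
contains no edge of `D`. -/
theorem statement0 (ℓ β : ℕ) (hℓ : 1 ≤ ℓ) (hβ : 1 ≤ β) (a b : ℕ → ℕ → Bool)
    (i r j s : ℕ) (hi : 1 ≤ i) (hi' : i ≤ ℓ) (hr : 1 ≤ r) (hr' : r ≤ ℓ)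
    (hj : 1 ≤ j) (hj' : j ≤ β) (hs : 1 ≤ s) (hs' : s ≤ β)
    (h : Edge ℓ β a b (V.x1 i) (V.x2 r) ∨ Edge ℓ β a b (V.y1 i) (V.y2 r)) :
    Walk (fun u w => Edge ℓ β a b u w ∧ ¬ InD ℓ β u w) (V.xx i j) (V.yy r s) 5 := by
  have nD : ∀ u w : V, (∀ i j, u ≠ V.xx i j) → ¬ InD ℓ β u w := by
    rintro u w hu ⟨i, j, r, s, -, -, -, -, -, -, -, -, rfl, -⟩
    exact hu i j rfl
  have nD2 : ∀ u w : V, (∀ r s, w ≠ V.yy r s) → ¬ InD ℓ β u w := by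
    rintro u w hw ⟨i, j, r, s, -, -, -, -, -, -, -, -, -, rfl⟩
    exact hw r s rfl
  have e1 : Edge ℓ β a b (V.xx i j) (V.x1 i) :=
    Or.inr (Or.inr (Or.inr (Or.inl ⟨i, j, hi, hi', hj, hj', rfl, rfl⟩)))
  have e4 : Edge ℓ β a b (V.y2 r) (V.y3 r) :=
    Or.inr (Or.inr (Or.inr (Or.inr (Or.inr (Or.inl ⟨r, hr, hr', rfl, rfl⟩)))))
  have e5 : Edge ℓ β a b (V.y3 r) (V.yy r s) :=
    Or.inr (Or.inr (Or.inr (Or.inr (Or.inl ⟨r, s, hr, hr', hs, hs', rfl, rfl⟩))))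
  have tail : Walk (fun u w => Edge ℓ β a b u w ∧ ¬ InD ℓ β u w) (V.y2 r) (V.yy r s) 2 :=
    Walk.cons ⟨e4, nD _ _ (fun _ _ => V.noConfusion)⟩
      (Walk.cons ⟨e5, nD _ _ (fun _ _ => V.noConfusion)⟩ (Walk.nil _))
  rcases h with hx | hy
  · exact Walk.cons ⟨e1, nD2 _ _ (fun _ _ => V.noConfusion)⟩
      (Walk.cons ⟨hx, nD _ _ (fun _ _ => V.noConfusion)⟩
      (Walk.cons ⟨Or.inr (Or.inl ⟨r, hr, hr', rfl, rfl⟩), nD _ _ (fun _ _ => V.noConfusion)⟩ tail))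
  · exact Walk.cons ⟨e1, nD2 _ _ (fun _ _ => V.noConfusion)⟩
      (Walk.cons ⟨Or.inl ⟨i, hi, hi', rfl, rfl⟩, nD _ _ (fun _ _ => V.noConfusion)⟩
      (Walk.cons ⟨hy, nD _ _ (fun _ _ => V.noConfusion)⟩ tail))


end Spanner
end

section
/- In the directed graph G(ℓ,β), for all indices 1 ≤ i, r ≤ ℓ and 1 ≤ j, s ≤ β: if neither of the edges (x¹_i, x²_r), (y¹_i, y²_r) is present in G(ℓ,β), then the only directed path (of any length) from x_{ij} to y_{rs} is the single-edge path consisting of the edge (x_{ij}, y_{rs}) ∈ D. -/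
namespace Spanner

/-- A list of vertices is a directed walk with respect to the edge relation `E`. -/
def IsWalkList (E : V → V → Prop) : List V → Prop
  | [] => True
  | [_] => True
  | u :: v :: rest => E u v ∧ IsWalkList E (v :: rest)

variable {ℓ β : ℕ} {a b : ℕ → ℕ → Bool}

lemma edge_from_yy {p q : ℕ} {w : V} : ¬ Edge ℓ β a b (V.yy p q) w := by
  simp [Edge]

lemma edge_from_xx {i j : ℕ} {w : V} (h : Edge ℓ β a b (V.xx i j) w) :
    (∃ p q, w = V.yy p q) ∨ w = V.x1 i := by
  rcases h with ⟨_,_,_,h,_⟩|⟨_,_,_,h,_⟩|⟨_,_,_,_,_,_,_,_,_,_,_,_,h1,h2⟩|⟨_,_,_,_,_,_,h1,h2⟩|⟨_,_,_,_,_,_,h,_⟩|⟨_,_,_,h,_⟩|⟨_,_,_,_,_,_,_,h,_⟩|⟨_,_,_,_,_,_,_,h,_⟩ <;>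
    first
    | cases h
    | (left; exact ⟨_, _, h2⟩)
    | (right; cases h1; exact h2)

lemma edge_from_x1 {i : ℕ} {w : V} (h : Edge ℓ β a b (V.x1 i) w) :
    w = V.y1 i ∨ ∃ k, 1 ≤ i ∧ i ≤ ℓ ∧ 1 ≤ k ∧ k ≤ ℓ ∧ a i k = false ∧ w = V.x2 k := by
  rcases h with ⟨_,_,_,h1,h2⟩|⟨_,_,_,h,_⟩|⟨_,_,_,_,_,_,_,_,_,_,_,_,h,_⟩|⟨_,_,_,_,_,_,h,_⟩|⟨_,_,_,_,_,_,h,_⟩|⟨_,_,_,h,_⟩|⟨_,_,h3,h4,h5,h6,h7,h1,h2⟩|⟨_,_,_,_,_,_,_,h,_⟩ <;>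
    first
    | cases h
    | (left; cases h1; exact h2)
    | (right; cases h1; exact ⟨_, h3, h4, h5, h6, h7, h2⟩)

lemma edge_from_y1 {i : ℕ} {w : V} (h : Edge ℓ β a b (V.y1 i) w) :
    ∃ k, 1 ≤ i ∧ i ≤ ℓ ∧ 1 ≤ k ∧ k ≤ ℓ ∧ b i k = false ∧ w = V.y2 k := by
  rcases h with ⟨_,_,_,h,_⟩|⟨_,_,_,h,_⟩|⟨_,_,_,_,_,_,_,_,_,_,_,_,h,_⟩|⟨_,_,_,_,_,_,h,_⟩|⟨_,_,_,_,_,_,h,_⟩|⟨_,_,_,h,_⟩|⟨_,_,_,_,_,_,_,h,_⟩|⟨_,_,h3,h4,h5,h6,h7,h1,h2⟩ <;>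
    first
    | cases h
    | (cases h1; exact ⟨_, h3, h4, h5, h6, h7, h2⟩)

lemma edge_from_x2 {k : ℕ} {w : V} (h : Edge ℓ β a b (V.x2 k) w) : w = V.y2 k := by
  rcases h with ⟨_,_,_,h,_⟩|⟨_,_,_,h1,h2⟩|⟨_,_,_,_,_,_,_,_,_,_,_,_,h,_⟩|⟨_,_,_,_,_,_,h,_⟩|⟨_,_,_,_,_,_,h,_⟩|⟨_,_,_,h,_⟩|⟨_,_,_,_,_,_,_,h,_⟩|⟨_,_,_,_,_,_,_,h,_⟩ <;>
    first
    | cases h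
    | (cases h1; exact h2)

lemma edge_from_y2 {k : ℕ} {w : V} (h : Edge ℓ β a b (V.y2 k) w) : w = V.y3 k := by
  rcases h with ⟨_,_,_,h,_⟩|⟨_,_,_,h,_⟩|⟨_,_,_,_,_,_,_,_,_,_,_,_,h,_⟩|⟨_,_,_,_,_,_,h,_⟩|⟨_,_,_,_,_,_,h,_⟩|⟨_,_,_,h1,h2⟩|⟨_,_,_,_,_,_,_,h,_⟩|⟨_,_,_,_,_,_,_,h,_⟩ <;>
    first
    | cases h
    | (cases h1; exact h2)

lemma edge_from_y3 {k : ℕ} {w : V} (h : Edge ℓ β a b (V.y3 k) w) : ∃ t, w = V.yy k t := by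
  rcases h with ⟨_,_,_,h,_⟩|⟨_,_,_,h,_⟩|⟨_,_,_,_,_,_,_,_,_,_,_,_,h,_⟩|⟨_,_,_,_,_,_,h,_⟩|⟨_,_,_,_,_,_,h1,h2⟩|⟨_,_,_,h,_⟩|⟨_,_,_,_,_,_,_,h,_⟩|⟨_,_,_,_,_,_,_,h,_⟩ <;>
    first
    | cases h
    | (cases h1; exact ⟨_, h2⟩)

lemma from_y2 {k r s : ℕ} : ∀ q, IsWalkList (Edge ℓ β a b) (V.y2 k :: q) →
    (V.y2 k :: q).getLast? = some (V.yy r s) → k = r := by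
  rintro (_ | ⟨w3, _ | ⟨w4, _ | ⟨w5, q⟩⟩⟩) hp hl
  · simp at hl
  · obtain ⟨he, -⟩ := hp
    cases edge_from_y2 he
    simp at hl
  · obtain ⟨he1, he2, -⟩ := hp
    cases edge_from_y2 he1
    obtain ⟨t, rfl⟩ := edge_from_y3 he2
    simp at hl
    exact hl.1
  · obtain ⟨he1, he2, he3, -⟩ := hp
    cases edge_from_y2 he1
    obtain ⟨t, rfl⟩ := edge_from_y3 he2
    exact absurd he3 edge_from_yy

lemma from_x1 {i r s : ℕ}
    (hx : ¬ Edge ℓ β a b (V.x1 i) (V.x2 r)) (hy : ¬ Edge ℓ β a b (V.y1 i) (V.y2 r)) :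
    ∀ q, IsWalkList (Edge ℓ β a b) (V.x1 i :: q) →
    (V.x1 i :: q).getLast? = some (V.yy r s) → False := by
  rintro (_ | ⟨w, q⟩) hp hl
  · simp at hl
  · obtain ⟨he, hp'⟩ := hp
    rcases edge_from_x1 he with rfl | ⟨k, h1, h2, h3, h4, h5, rfl⟩
    · rcases q with _ | ⟨w2, q2⟩
      · simp at hl
      · obtain ⟨he2, hp2⟩ := hp'
        obtain ⟨k, h1, h2, h3, h4, h5, rfl⟩ := edge_from_y1 he2
        have hk : k = r := from_y2 q2 hp2 (by simpa using hl)
        subst hk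
        exact hy (Or.inr <| Or.inr <| Or.inr <| Or.inr <| Or.inr <| Or.inr <| Or.inr
          ⟨i, k, h1, h2, h3, h4, h5, rfl, rfl⟩)
    · rcases q with _ | ⟨w2, q2⟩
      · simp at hl
      · obtain ⟨he2, hp2⟩ := hp'
        cases edge_from_x2 he2
        have hk : k = r := from_y2 q2 hp2 (by simpa using hl)
        subst hk
        exact hx (Or.inr <| Or.inr <| Or.inr <| Or.inr <| Or.inr <| Or.inr <| Or.inl
          ⟨i, k, h1, h2, h3, h4, h5, rfl, rfl⟩)

/-- If neither of the edges `(x¹_i, x²_r)`, `(y¹_i, y²_r)` is present in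
`G(ℓ,β)`, then the only directed path (of any length) from `x_{ij}` to `y_{rs}` is the
single-edge path consisting of the edge `(x_{ij}, y_{rs}) ∈ D`. -/
theorem statement1 (ℓ β : ℕ) (hℓ : 1 ≤ ℓ) (hβ : 1 ≤ β) (a b : ℕ → ℕ → Bool)
    (i r j s : ℕ) (hi : 1 ≤ i) (hi' : i ≤ ℓ) (hr : 1 ≤ r) (hr' : r ≤ ℓ)
    (hj : 1 ≤ j) (hj' : j ≤ β) (hs : 1 ≤ s) (hs' : s ≤ β)
    (hx : ¬ Edge ℓ β a b (V.x1 i) (V.x2 r)) (hy : ¬ Edge ℓ β a b (V.y1 i) (V.y2 r)) :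
    ∀ p : List V, IsWalkList (Edge ℓ β a b) p →
      p.head? = some (V.xx i j) → p.getLast? = some (V.yy r s) →
      p = [V.xx i j, V.yy r s] := by
  rintro (_ | ⟨u, _ | ⟨v, rest⟩⟩) hp hh hl
  · simp at hh
  · simp at hh
    subst hh
    simp at hl
  · simp at hh
    subst hh
    obtain ⟨he, hp'⟩ := hp
    rcases edge_from_xx he with ⟨p', q', rfl⟩ | rfl
    · rcases rest with _ | ⟨w, rest'⟩
      · simp at hl
        simp [hl.1, hl.2]
      · exact absurd hp'.1 edge_from_yy
    · exact absurd hl (by intro hl; exact from_x1 hx hy rest hp' (by simpa using hl))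

end Spanner
end

section
/- Let ℓ ≤ β and k ≥ 5. If the strings a and b are disjoint, then the set of all edges of G(ℓ,β) that are not in D is a k-spanner of G(ℓ,β), and it has at most 7ℓβ edges (so G(ℓ,β) has a k-spanner of size at most 7ℓβ). -/
namespace Spanner

/-- `H` is a `k`-spanner of `G(ℓ,β)`: a subset of the edges such that every edge `(u,w)`
of the graph is connected by a directed path of length at most `k` of edges of `H`. -/
def IsSpanner (ℓ β k : ℕ) (a b : ℕ → ℕ → Bool) (H : Set (V × V)) : Prop :=
  (∀ p ∈ H, Edge ℓ β a b p.1 p.2) ∧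
  (∀ u w, Edge ℓ β a b u w → ∃ n, n ≤ k ∧ Walk (fun x y => (x, y) ∈ H) u w n)

/-- If `ℓ ≤ β`, `k ≥ 5` and the strings `a`, `b` are disjoint, then the set
of all edges of `G(ℓ,β)` not in `D` is a `k`-spanner of `G(ℓ,β)` with at most `7ℓβ` edges. -/
theorem statement2 (ℓ β k : ℕ) (hℓ : 1 ≤ ℓ) (hlb : ℓ ≤ β) (hk : 5 ≤ k)
    (a b : ℕ → ℕ → Bool)
    (hdisj : ¬ ∃ i j, 1 ≤ i ∧ i ≤ ℓ ∧ 1 ≤ j ∧ j ≤ ℓ ∧ a i j = true ∧ b i j = true) :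
    IsSpanner ℓ β k a b {p : V × V | Edge ℓ β a b p.1 p.2 ∧ ¬ InD ℓ β p.1 p.2} ∧
    {p : V × V | Edge ℓ β a b p.1 p.2 ∧ ¬ InD ℓ β p.1 p.2}.ncard ≤ 7 * ℓ * β := by
  set H : Set (V × V) := {p : V × V | Edge ℓ β a b p.1 p.2 ∧ ¬ InD ℓ β p.1 p.2} with hHdef
  constructor
  · constructor
    · intro p hp; exact hp.1
    · intro u w he
      by_cases hD : InD ℓ β u w
      · obtain ⟨i, j, r, s, hi1, hi2, hr1, hr2, hj1, hj2, hs1, hs2, hu, hw⟩ := hD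
        subst hu; subst hw
        have e1 : (V.xx i j, V.x1 i) ∈ H := by
          refine ⟨Or.inr (Or.inr (Or.inr (Or.inl ⟨i, j, hi1, hi2, hj1, hj2, rfl, rfl⟩))), ?_⟩
          rintro ⟨_, _, _, _, _, _, _, _, _, _, _, _, _, h⟩; simp at h
        have e4 : (V.x2 r, V.y2 r) ∈ H := by
          refine ⟨Or.inr (Or.inl ⟨r, hr1, hr2, rfl, rfl⟩), ?_⟩
          rintro ⟨_, _, _, _, _, _, _, _, _, _, _, _, h, _⟩; simp at h
        have e5 : (V.y2 r, V.y3 r) ∈ H := by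
          refine ⟨Or.inr (Or.inr (Or.inr (Or.inr (Or.inr (Or.inl ⟨r, hr1, hr2, rfl, rfl⟩))))), ?_⟩
          rintro ⟨_, _, _, _, _, _, _, _, _, _, _, _, h, _⟩; simp at h
        have e6 : (V.y3 r, V.yy r s) ∈ H := by
          refine ⟨Or.inr (Or.inr (Or.inr (Or.inr (Or.inl ⟨r, s, hr1, hr2, hs1, hs2, rfl, rfl⟩)))), ?_⟩
          rintro ⟨_, _, _, _, _, _, _, _, _, _, _, _, h, _⟩; simp at h
        refine ⟨5, hk, ?_⟩
        by_cases ha : a i r = true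
        · have hb : b i r = false := by
            by_contra hb
            exact hdisj ⟨i, r, hi1, hi2, hr1, hr2, ha, by simpa using hb⟩
          have e2 : (V.x1 i, V.y1 i) ∈ H := by
            refine ⟨Or.inl ⟨i, hi1, hi2, rfl, rfl⟩, ?_⟩
            rintro ⟨_, _, _, _, _, _, _, _, _, _, _, _, h, _⟩; simp at h
          have e3 : (V.y1 i, V.y2 r) ∈ H := by
            refine ⟨Or.inr (Or.inr (Or.inr (Or.inr (Or.inr (Or.inr (Or.inr
              ⟨i, r, hi1, hi2, hr1, hr2, hb, rfl, rfl⟩)))))), ?_⟩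
            rintro ⟨_, _, _, _, _, _, _, _, _, _, _, _, h, _⟩; simp at h
          exact Walk.cons e1 (Walk.cons e2 (Walk.cons e3 (Walk.cons e5
            (Walk.cons e6 (Walk.nil _)))))
        · have ha' : a i r = false := by simpa using ha
          have e2 : (V.x1 i, V.x2 r) ∈ H := by
            refine ⟨Or.inr (Or.inr (Or.inr (Or.inr (Or.inr (Or.inr (Or.inl
              ⟨i, r, hi1, hi2, hr1, hr2, ha', rfl, rfl⟩)))))), ?_⟩
            rintro ⟨_, _, _, _, _, _, _, _, _, _, _, _, h, _⟩; simp at h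
          exact Walk.cons e1 (Walk.cons e2 (Walk.cons e4 (Walk.cons e5
            (Walk.cons e6 (Walk.nil _)))))
      · exact ⟨1, by omega, Walk.cons ⟨he, hD⟩ (Walk.nil w)⟩
  · -- cardinality
    classical
    set A : Finset (V × V) := (Finset.Icc 1 ℓ).image fun i => (V.x1 i, V.y1 i) with hA
    set B : Finset (V × V) := (Finset.Icc 1 ℓ).image fun i => (V.x2 i, V.y2 i) with hB
    set C : Finset (V × V) := (Finset.Icc 1 ℓ).image fun i => (V.y2 i, V.y3 i) with hC
    set D : Finset (V × V) :=
      ((Finset.Icc 1 ℓ) ×ˢ (Finset.Icc 1 β)).image fun p => (V.xx p.1 p.2, V.x1 p.1) with hD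
    set E : Finset (V × V) :=
      ((Finset.Icc 1 ℓ) ×ˢ (Finset.Icc 1 β)).image fun p => (V.y3 p.1, V.yy p.1 p.2) with hE
    set F : Finset (V × V) :=
      ((Finset.Icc 1 ℓ) ×ˢ (Finset.Icc 1 ℓ)).image fun p => (V.x1 p.1, V.x2 p.2) with hF
    set G : Finset (V × V) :=
      ((Finset.Icc 1 ℓ) ×ˢ (Finset.Icc 1 ℓ)).image fun p => (V.y1 p.1, V.y2 p.2) with hG
    set S : Finset (V × V) := A ∪ B ∪ C ∪ D ∪ E ∪ F ∪ G with hS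
    have hsub : H ⊆ (S : Set (V × V)) := by
      rintro ⟨u, w⟩ ⟨he, hnd⟩
      have goal : (u, w) ∈ S := by
        simp only [hS, hA, hB, hC, hD, hE, hF, hG, Finset.mem_union, Finset.mem_image,
          Finset.mem_product, Finset.mem_Icc, Prod.exists, Prod.mk.injEq]
        rcases he with ⟨i, h1, h2, hu, hw⟩ | ⟨i, h1, h2, hu, hw⟩ |
          ⟨i, j, r, s, h1, h2, h3, h4, h5, h6, h7, h8, hu, hw⟩ |
          ⟨i, j, h1, h2, h3, h4, hu, hw⟩ | ⟨i, j, h1, h2, h3, h4, hu, hw⟩ |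
          ⟨i, h1, h2, hu, hw⟩ | ⟨i, j, h1, h2, h3, h4, _, hu, hw⟩ |
          ⟨i, j, h1, h2, h3, h4, _, hu, hw⟩ <;> subst hu <;> subst hw
        · exact Or.inl <| Or.inl <| Or.inl <| Or.inl <| Or.inl <| Or.inl
            ⟨i, ⟨h1, h2⟩, rfl, rfl⟩
        · exact Or.inl <| Or.inl <| Or.inl <| Or.inl <| Or.inl <| Or.inr
            ⟨i, ⟨h1, h2⟩, rfl, rfl⟩
        · exact absurd ⟨i, j, r, s, h1, h2, h3, h4, h5, h6, h7, h8, rfl, rfl⟩ hnd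
        · exact Or.inl <| Or.inl <| Or.inl <| Or.inr ⟨i, j, ⟨⟨h1, h2⟩, ⟨h3, h4⟩⟩, rfl, rfl⟩
        · exact Or.inl <| Or.inl <| Or.inr ⟨i, j, ⟨⟨h1, h2⟩, ⟨h3, h4⟩⟩, rfl, rfl⟩
        · exact Or.inl <| Or.inl <| Or.inl <| Or.inl <| Or.inr ⟨i, ⟨h1, h2⟩, rfl, rfl⟩
        · exact Or.inl <| Or.inr ⟨i, j, ⟨⟨h1, h2⟩, ⟨h3, h4⟩⟩, rfl, rfl⟩
        · exact Or.inr ⟨i, j, ⟨⟨h1, h2⟩, ⟨h3, h4⟩⟩, rfl, rfl⟩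
      exact goal
    have hIcc : ∀ m : ℕ, (Finset.Icc 1 m).card = m := fun m => by simp [Nat.card_Icc]
    have cA : A.card ≤ ℓ := le_trans Finset.card_image_le (by rw [hIcc])
    have cB : B.card ≤ ℓ := le_trans Finset.card_image_le (by rw [hIcc])
    have cC : C.card ≤ ℓ := le_trans Finset.card_image_le (by rw [hIcc])
    have cD : D.card ≤ ℓ * β :=
      le_trans Finset.card_image_le (by simp [Nat.card_Icc])
    have cE : E.card ≤ ℓ * β :=
      le_trans Finset.card_image_le (by simp [Nat.card_Icc])
    have cF : F.card ≤ ℓ * ℓ :=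
      le_trans Finset.card_image_le (by simp [Nat.card_Icc])
    have cG : G.card ≤ ℓ * ℓ :=
      le_trans Finset.card_image_le (by simp [Nat.card_Icc])
    have hcard : S.card ≤ ℓ + ℓ + ℓ + ℓ * β + ℓ * β + ℓ * ℓ + ℓ * ℓ := by
      calc S.card ≤ (A ∪ B ∪ C ∪ D ∪ E ∪ F).card + G.card := Finset.card_union_le _ _
        _ ≤ (A ∪ B ∪ C ∪ D ∪ E).card + F.card + G.card :=
            Nat.add_le_add_right (Finset.card_union_le _ _) _
        _ ≤ (A ∪ B ∪ C ∪ D).card + E.card + F.card + G.card :=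
            Nat.add_le_add_right (Nat.add_le_add_right (Finset.card_union_le _ _) _) _
        _ ≤ (A ∪ B ∪ C).card + D.card + E.card + F.card + G.card :=
            Nat.add_le_add_right (Nat.add_le_add_right
              (Nat.add_le_add_right (Finset.card_union_le _ _) _) _) _
        _ ≤ (A ∪ B).card + C.card + D.card + E.card + F.card + G.card :=
            Nat.add_le_add_right (Nat.add_le_add_right (Nat.add_le_add_right
              (Nat.add_le_add_right (Finset.card_union_le _ _) _) _) _) _
        _ ≤ A.card + B.card + C.card + D.card + E.card + F.card + G.card :=
            Nat.add_le_add_right (Nat.add_le_add_right (Nat.add_le_add_right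
              (Nat.add_le_add_right (Nat.add_le_add_right (Finset.card_union_le _ _) _) _) _) _) _
        _ ≤ ℓ + ℓ + ℓ + ℓ * β + ℓ * β + ℓ * ℓ + ℓ * ℓ := by
            omega
    have hle := Set.ncard_le_ncard hsub (Finset.finite_toSet S)
    rw [Set.ncard_coe_finset] at hle
    have hfin : ℓ + ℓ + ℓ + ℓ * β + ℓ * β + ℓ * ℓ + ℓ * ℓ ≤ 7 * ℓ * β := by nlinarith
    omega


end Spanner
end

section
/- Let k ≥ 5. If the strings a and b are not disjoint (i.e., there is a pair (i,r) with a_{ir} = b_{ir} = 1), then every k-spanner of G(ℓ,β) contains at least β² edges of D. -/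
namespace Spanner

/-- Vertices from which `yy r s` is unreachable (given `a i r = b i r = true`). -/
def Good (r s : ℕ) (a b : ℕ → ℕ → Bool) : V → Prop
  | V.x1 p => a p r = true ∧ b p r = true
  | V.x2 p => p ≠ r
  | V.y1 p => b p r = true
  | V.y2 p => p ≠ r
  | V.y3 p => p ≠ r
  | V.xx _ _ => False
  | V.yy p q => p ≠ r ∨ q ≠ s

lemma good_closed {ℓ β r s : ℕ} {a b : ℕ → ℕ → Bool} {u v : V}
    (h : Good r s a b u) (e : Edge ℓ β a b u v) : Good r s a b v := by
  rcases e with ⟨i, _, _, rfl, rfl⟩ | ⟨i, _, _, rfl, rfl⟩ |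
    ⟨i, j, r', s', _, _, _, _, _, _, _, _, rfl, rfl⟩ |
    ⟨i, j, _, _, _, _, rfl, rfl⟩ | ⟨i, j, _, _, _, _, rfl, rfl⟩ |
    ⟨i, _, _, rfl, rfl⟩ | ⟨i, j, _, _, _, _, hab, rfl, rfl⟩ |
    ⟨i, j, _, _, _, _, hab, rfl, rfl⟩
  · exact h.2
  · exact h
  · exact h.elim
  · exact h.elim
  · exact Or.inl h
  · exact h
  · rintro rfl; exact absurd h.1 (by simp [hab])
  · rintro rfl; exact absurd (show b i j = true from h) (by simp [hab])

lemma walk_good {ℓ β r s : ℕ} {a b : ℕ → ℕ → Bool} {u w : V} {n : ℕ}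
    (hw : Walk (Edge ℓ β a b) u w n) (h : Good r s a b u) : Good r s a b w := by
  induction hw with
  | nil => exact h
  | cons e _ ih => exact ih (good_closed h e)

lemma walk_mono {E E' : V → V → Prop} (hEE : ∀ x y, E x y → E' x y) {u w : V} {n : ℕ}
    (hw : Walk E u w n) : Walk E' u w n := by
  induction hw with
  | nil => exact Walk.nil _
  | cons e _ ih => exact Walk.cons (hEE _ _ e) ih

lemma yy_terminal {ℓ β : ℕ} {a b : ℕ → ℕ → Bool} {p q : ℕ} {w : V} {n : ℕ}
    (hw : Walk (Edge ℓ β a b) (V.yy p q) w n) : w = V.yy p q := by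
  cases hw with
  | nil => rfl
  | cons e _ =>
    exfalso
    rcases e with ⟨i, _, _, hu, _⟩ | ⟨i, _, _, hu, _⟩ |
      ⟨i, j, r', s', _, _, _, _, _, _, _, _, hu, _⟩ |
      ⟨i, j, _, _, _, _, hu, _⟩ | ⟨i, j, _, _, _, _, hu, _⟩ |
      ⟨i, _, _, hu, _⟩ | ⟨i, j, _, _, _, _, _, hu, _⟩ |
      ⟨i, j, _, _, _, _, _, hu, _⟩ <;> exact absurd hu (by simp)

/-- If `k ≥ 5` and the strings `a`, `b` are not disjoint, then every
`k`-spanner of `G(ℓ,β)` contains at least `β²` edges of `D`. -/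
theorem statement3 (ℓ β k : ℕ) (hℓ : 1 ≤ ℓ) (hβ : 1 ≤ β) (hk : 5 ≤ k)
    (a b : ℕ → ℕ → Bool)
    (hint : ∃ i r, 1 ≤ i ∧ i ≤ ℓ ∧ 1 ≤ r ∧ r ≤ ℓ ∧ a i r = true ∧ b i r = true)
    (H : Set (V × V)) (hH : IsSpanner ℓ β k a b H) :
    β ^ 2 ≤ {p ∈ H | InD ℓ β p.1 p.2}.ncard := by
  obtain ⟨i, r, hi1, hi2, hr1, hr2, hair, hbir⟩ := hint
  obtain ⟨hH1, hH2⟩ := hH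
  have hEdgeLift : ∀ {u w : V} {n : ℕ}, Walk (fun x y => (x, y) ∈ H) u w n →
      Walk (Edge ℓ β a b) u w n :=
    fun hw => walk_mono (fun x y hxy => hH1 (x, y) hxy) hw
  -- key claim: every relevant D-edge is in H
  have key : ∀ j s, 1 ≤ j → j ≤ β → 1 ≤ s → s ≤ β → (V.xx i j, V.yy r s) ∈ H := by
    intro j s hj1 hj2 hs1 hs2
    have hedge : Edge ℓ β a b (V.xx i j) (V.yy r s) :=
      Or.inr (Or.inr (Or.inl ⟨i, j, r, s, hi1, hi2, hr1, hr2, hj1, hj2, hs1, hs2, rfl, rfl⟩))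
    obtain ⟨n, _, hw⟩ := hH2 _ _ hedge
    cases hw with
    | @cons _ v _ m e rest =>
      have eE : Edge ℓ β a b (V.xx i j) v := hH1 _ e
      rcases eE with ⟨i', _, _, hu, _⟩ | ⟨i', _, _, hu, _⟩ |
        ⟨i', j', r', s', _, _, _, _, _, _, _, _, hu, hv⟩ |
        ⟨i', j', _, _, _, _, hu, hv⟩ | ⟨i', j', _, _, _, _, hu, _⟩ |
        ⟨i', _, _, hu, _⟩ | ⟨i', j', _, _, _, _, _, hu, _⟩ |
        ⟨i', j', _, _, _, _, _, hu, _⟩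
      · exact absurd hu (by simp)
      · exact absurd hu (by simp)
      · -- first step is a D-edge; it must land at yy r s
        subst hv
        have := yy_terminal (hEdgeLift rest)
        obtain ⟨rfl, rfl⟩ : r = r' ∧ s = s' := by
          simpa [V.yy.injEq] using this
        exact e
      · -- first step goes to x1 i; but yy r s is unreachable from x1 i
        exfalso
        obtain ⟨h1, h2⟩ := V.xx.inj hu
        subst hv
        have hgood : Good r s a b (V.x1 i') := ⟨h1 ▸ hair, h1 ▸ hbir⟩
        have := walk_good (hEdgeLift rest) hgood
        simp [Good] at this
      · exact absurd hu (by simp)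
      · exact absurd hu (by simp)
      · exact absurd hu (by simp)
      · exact absurd hu (by simp)
  -- counting
  set S : Set (V × V) := {p ∈ H | InD ℓ β p.1 p.2} with hS
  have hfin : S.Finite := by
    have hsub : S ⊆ (fun p : (ℕ × ℕ) × ℕ × ℕ => (V.xx p.1.1 p.1.2, V.yy p.2.1 p.2.2)) ''
        ↑(((Finset.Icc 1 ℓ) ×ˢ (Finset.Icc 1 β)) ×ˢ ((Finset.Icc 1 ℓ) ×ˢ (Finset.Icc 1 β))) := by
      rintro ⟨u, w⟩ ⟨_, i', j', r', s', h1, h2, h3, h4, h5, h6, h7, h8, rfl, rfl⟩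
      refine ⟨((i', j'), (r', s')), Finset.mem_coe.mpr ?_, rfl⟩
      exact Finset.mem_product.mpr ⟨Finset.mem_product.mpr
        ⟨Finset.mem_Icc.mpr ⟨h1, h2⟩, Finset.mem_Icc.mpr ⟨h5, h6⟩⟩,
        Finset.mem_product.mpr ⟨Finset.mem_Icc.mpr ⟨h3, h4⟩, Finset.mem_Icc.mpr ⟨h7, h8⟩⟩⟩
    exact Set.Finite.subset (Set.Finite.image _ (Finset.finite_toSet _)) hsub
  have hinj : Function.Injective (fun p : ℕ × ℕ => (V.xx i p.1, V.yy r p.2)) := by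
    rintro ⟨j, s⟩ ⟨j', s'⟩ h
    simp only [Prod.mk.injEq, V.xx.injEq, V.yy.injEq] at h
    simp [h.1.2, h.2.2]
  set F : Finset (V × V) :=
    ((Finset.Icc 1 β) ×ˢ (Finset.Icc 1 β)).image (fun p : ℕ × ℕ => (V.xx i p.1, V.yy r p.2))
    with hF
  have hFcard : F.card = β ^ 2 := by
    rw [hF, Finset.card_image_of_injective _ hinj, Finset.card_product, Nat.card_Icc]
    simp [sq]
  have hFsub : ↑F ⊆ S := by
    intro p hp
    rw [hF] at hp
    simp only [Finset.coe_image, Set.mem_image, Finset.mem_coe, Finset.mem_product,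
      Finset.mem_Icc] at hp
    obtain ⟨⟨j, s⟩, ⟨⟨hj1, hj2⟩, hs1, hs2⟩, rfl⟩ := hp
    exact ⟨key j s hj1 hj2 hs1 hs2,
      ⟨i, j, r, s, hi1, hi2, hr1, hr2, hj1, hj2, hs1, hs2, rfl, rfl⟩⟩
  calc β ^ 2 = (↑F : Set (V × V)).ncard := by rw [Set.ncard_coe_finset, hFcard]
    _ ≤ S.ncard := Set.ncard_le_ncard hFsub hfin

end Spanner
end

section
/- Let 1 ≤ β ≤ ℓ and k ≥ 5. If the strings a and b are disjoint, then G(ℓ,β) has a k-spanner of size at most 7ℓ² (namely, the set of all edges not in D). -/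
namespace Spanner

lemma not_inD_of_ne_yy (ℓ β : ℕ) {u w : V} (h : ∀ r s, w ≠ V.yy r s) : ¬ InD ℓ β u w := by
  rintro ⟨i, j, r, s, _, _, _, _, _, _, _, _, _, rfl⟩
  exact h r s rfl

lemma not_inD_of_ne_xx (ℓ β : ℕ) {u w : V} (h : ∀ i j, u ≠ V.xx i j) : ¬ InD ℓ β u w := by
  rintro ⟨i, j, r, s, _, _, _, _, _, _, _, _, rfl, _⟩
  exact h i j rfl

/-- If `1 ≤ β ≤ ℓ`, `k ≥ 5` and the strings `a`, `b` are disjoint, then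
`G(ℓ,β)` has a `k`-spanner of size at most `7ℓ²`, namely the set of all edges not in `D`. -/
theorem statement4 (ℓ β k : ℕ) (hβ : 1 ≤ β) (hbl : β ≤ ℓ) (hk : 5 ≤ k)
    (a b : ℕ → ℕ → Bool)
    (hdisj : ¬ ∃ i j, 1 ≤ i ∧ i ≤ ℓ ∧ 1 ≤ j ∧ j ≤ ℓ ∧ a i j = true ∧ b i j = true) :
    IsSpanner ℓ β k a b {p : V × V | Edge ℓ β a b p.1 p.2 ∧ ¬ InD ℓ β p.1 p.2} ∧
    {p : V × V | Edge ℓ β a b p.1 p.2 ∧ ¬ InD ℓ β p.1 p.2}.ncard ≤ 7 * ℓ ^ 2 := by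
  have hℓ : 1 ≤ ℓ := le_trans hβ hbl
  constructor
  · constructor
    · rintro ⟨u, w⟩ ⟨he, _⟩
      exact he
    · intro u w he
      by_cases hD : InD ℓ β u w
      · obtain ⟨i, j, r, s, hi1, hi2, hr1, hr2, hj1, hj2, hs1, hs2, rfl, rfl⟩ := hD
        have key : a i r = false ∨ b i r = false := by
          cases ha : a i r
          · exact Or.inl rfl
          · cases hb : b i r
            · exact Or.inr rfl
            · exact absurd ⟨i, r, hi1, hi2, hr1, hr2, ha, hb⟩ hdisj
        have e1 : (V.xx i j, V.x1 i) ∈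
            {p : V × V | Edge ℓ β a b p.1 p.2 ∧ ¬ InD ℓ β p.1 p.2} :=
          ⟨Or.inr (Or.inr (Or.inr (Or.inl ⟨i, j, hi1, hi2, hj1, hj2, rfl, rfl⟩))),
            not_inD_of_ne_yy ℓ β (fun r s h => by cases h)⟩
        have e4 : (V.y2 r, V.y3 r) ∈
            {p : V × V | Edge ℓ β a b p.1 p.2 ∧ ¬ InD ℓ β p.1 p.2} :=
          ⟨Or.inr (Or.inr (Or.inr (Or.inr (Or.inr (Or.inl ⟨r, hr1, hr2, rfl, rfl⟩))))),
            not_inD_of_ne_xx ℓ β (fun i j h => by cases h)⟩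
        have e5 : (V.y3 r, V.yy r s) ∈
            {p : V × V | Edge ℓ β a b p.1 p.2 ∧ ¬ InD ℓ β p.1 p.2} :=
          ⟨Or.inr (Or.inr (Or.inr (Or.inr (Or.inl ⟨r, s, hr1, hr2, hs1, hs2, rfl, rfl⟩)))),
            not_inD_of_ne_xx ℓ β (fun i j h => by cases h)⟩
        rcases key with ha | hb
        · -- path via x2 r
          have e2 : (V.x1 i, V.x2 r) ∈
              {p : V × V | Edge ℓ β a b p.1 p.2 ∧ ¬ InD ℓ β p.1 p.2} :=
            ⟨Or.inr (Or.inr (Or.inr (Or.inr (Or.inr (Or.inr (Or.inl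
              ⟨i, r, hi1, hi2, hr1, hr2, ha, rfl, rfl⟩)))))),
              not_inD_of_ne_xx ℓ β (fun i j h => by cases h)⟩
          have e3 : (V.x2 r, V.y2 r) ∈
              {p : V × V | Edge ℓ β a b p.1 p.2 ∧ ¬ InD ℓ β p.1 p.2} :=
            ⟨Or.inr (Or.inl ⟨r, hr1, hr2, rfl, rfl⟩),
              not_inD_of_ne_xx ℓ β (fun i j h => by cases h)⟩
          exact ⟨5, hk, Walk.cons e1 (Walk.cons e2 (Walk.cons e3 (Walk.cons e4
            (Walk.cons e5 (Walk.nil _)))))⟩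
        · -- path via y1 i
          have e2 : (V.x1 i, V.y1 i) ∈
              {p : V × V | Edge ℓ β a b p.1 p.2 ∧ ¬ InD ℓ β p.1 p.2} :=
            ⟨Or.inl ⟨i, hi1, hi2, rfl, rfl⟩,
              not_inD_of_ne_xx ℓ β (fun i j h => by cases h)⟩
          have e3 : (V.y1 i, V.y2 r) ∈
              {p : V × V | Edge ℓ β a b p.1 p.2 ∧ ¬ InD ℓ β p.1 p.2} :=
            ⟨Or.inr (Or.inr (Or.inr (Or.inr (Or.inr (Or.inr (Or.inr
              ⟨i, r, hi1, hi2, hr1, hr2, hb, rfl, rfl⟩)))))),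
              not_inD_of_ne_xx ℓ β (fun i j h => by cases h)⟩
          exact ⟨5, hk, Walk.cons e1 (Walk.cons e2 (Walk.cons e3 (Walk.cons e4
            (Walk.cons e5 (Walk.nil _)))))⟩
      · exact ⟨1, by omega, Walk.cons ⟨he, hD⟩ (Walk.nil _)⟩
  · -- cardinality bound
    classical
    set F : Finset (V × V) :=
      ((Finset.range ℓ).image fun i => (V.x1 (i+1), V.y1 (i+1))) ∪
      ((Finset.range ℓ).image fun i => (V.x2 (i+1), V.y2 (i+1))) ∪
      ((Finset.range ℓ).image fun i => (V.y2 (i+1), V.y3 (i+1))) ∪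
      (((Finset.range ℓ) ×ˢ (Finset.range ℓ)).image
        fun p => (V.xx (p.1+1) (p.2+1), V.x1 (p.1+1))) ∪
      (((Finset.range ℓ) ×ˢ (Finset.range ℓ)).image
        fun p => (V.y3 (p.1+1), V.yy (p.1+1) (p.2+1))) ∪
      (((Finset.range ℓ) ×ˢ (Finset.range ℓ)).image
        fun p => (V.x1 (p.1+1), V.x2 (p.2+1))) ∪
      (((Finset.range ℓ) ×ˢ (Finset.range ℓ)).image
        fun p => (V.y1 (p.1+1), V.y2 (p.2+1))) with hF
    have hsub : {p : V × V | Edge ℓ β a b p.1 p.2 ∧ ¬ InD ℓ β p.1 p.2} ⊆ ↑F := by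
      rintro ⟨u, w⟩ ⟨he, hnd⟩
      simp only [hF, Finset.coe_union, Set.mem_union, Finset.mem_coe, Finset.mem_image,
        Finset.mem_range, Finset.mem_product, Prod.exists]
      rcases he with ⟨i, hi1, hi2, rfl, rfl⟩ | ⟨i, hi1, hi2, rfl, rfl⟩ |
        ⟨i, j, r, s, hi1, hi2, hr1, hr2, hj1, hj2, hs1, hs2, rfl, rfl⟩ |
        ⟨i, j, hi1, hi2, hj1, hj2, rfl, rfl⟩ | ⟨i, j, hi1, hi2, hj1, hj2, rfl, rfl⟩ |
        ⟨i, hi1, hi2, rfl, rfl⟩ | ⟨i, j, hi1, hi2, hj1, hj2, _, rfl, rfl⟩ |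
        ⟨i, j, hi1, hi2, hj1, hj2, _, rfl, rfl⟩
      · exact Or.inl (Or.inl (Or.inl (Or.inl (Or.inl (Or.inl
          ⟨i - 1, by omega, by simp only [show i - 1 + 1 = i from by omega]⟩)))))
      · exact Or.inl (Or.inl (Or.inl (Or.inl (Or.inl (Or.inr
          ⟨i - 1, by omega, by simp only [show i - 1 + 1 = i from by omega]⟩)))))
      · exact absurd ⟨i, j, r, s, hi1, hi2, hr1, hr2, hj1, hj2, hs1, hs2, rfl, rfl⟩ hnd
      · exact Or.inl (Or.inl (Or.inl (Or.inr ⟨i - 1, j - 1, ⟨by omega, by omega⟩,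
          by simp only [show i - 1 + 1 = i from by omega, show j - 1 + 1 = j from by omega]⟩)))
      · exact Or.inl (Or.inl (Or.inr ⟨i - 1, j - 1, ⟨by omega, by omega⟩, by simp only [show i - 1 + 1 = i from by omega, show j - 1 + 1 = j from by omega]⟩))
      · exact Or.inl (Or.inl (Or.inl (Or.inl (Or.inr ⟨i - 1, by omega, by simp only [show i - 1 + 1 = i from by omega]⟩))))
      · exact Or.inl (Or.inr ⟨i - 1, j - 1, ⟨by omega, by omega⟩,
          by simp only [show i - 1 + 1 = i from by omega, show j - 1 + 1 = j from by omega]⟩)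
      · exact Or.inr ⟨i - 1, j - 1, ⟨by omega, by omega⟩, by simp only [show i - 1 + 1 = i from by omega, show j - 1 + 1 = j from by omega]⟩
    have hcard : F.card ≤ ℓ + ℓ + ℓ + ℓ * ℓ + ℓ * ℓ + ℓ * ℓ + ℓ * ℓ := by
      have h1 := Finset.card_image_le (s := Finset.range ℓ)
        (f := fun i => (V.x1 (i+1), V.y1 (i+1)))
      have h2 := Finset.card_image_le (s := Finset.range ℓ)
        (f := fun i => (V.x2 (i+1), V.y2 (i+1)))
      have h3 := Finset.card_image_le (s := Finset.range ℓ)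
        (f := fun i => (V.y2 (i+1), V.y3 (i+1)))
      have h4 := Finset.card_image_le (s := (Finset.range ℓ) ×ˢ (Finset.range ℓ))
        (f := fun p => (V.xx (p.1+1) (p.2+1), V.x1 (p.1+1)))
      have h5 := Finset.card_image_le (s := (Finset.range ℓ) ×ˢ (Finset.range ℓ))
        (f := fun p => (V.y3 (p.1+1), V.yy (p.1+1) (p.2+1)))
      have h6 := Finset.card_image_le (s := (Finset.range ℓ) ×ˢ (Finset.range ℓ))
        (f := fun p => (V.x1 (p.1+1), V.x2 (p.2+1)))
      have h7 := Finset.card_image_le (s := (Finset.range ℓ) ×ˢ (Finset.range ℓ))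
        (f := fun p => (V.y1 (p.1+1), V.y2 (p.2+1)))
      simp only [Finset.card_range, Finset.card_product] at h1 h2 h3 h4 h5 h6 h7
      refine le_trans (Finset.card_union_le _ _) (Nat.add_le_add ?_ h7)
      refine le_trans (Finset.card_union_le _ _) (Nat.add_le_add ?_ h6)
      refine le_trans (Finset.card_union_le _ _) (Nat.add_le_add ?_ h5)
      refine le_trans (Finset.card_union_le _ _) (Nat.add_le_add ?_ h4)
      refine le_trans (Finset.card_union_le _ _) (Nat.add_le_add ?_ h3)
      exact le_trans (Finset.card_union_le _ _) (Nat.add_le_add h1 h2)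
    have hfin : (↑F : Set (V × V)).Finite := F.finite_toSet
    calc {p : V × V | Edge ℓ β a b p.1 p.2 ∧ ¬ InD ℓ β p.1 p.2}.ncard
        ≤ (↑F : Set (V × V)).ncard := Set.ncard_le_ncard hsub hfin
      _ = F.card := Set.ncard_coe_finset F
      _ ≤ ℓ + ℓ + ℓ + ℓ * ℓ + ℓ * ℓ + ℓ * ℓ + ℓ * ℓ := hcard
      _ ≤ 7 * ℓ ^ 2 := by nlinarith

end Spanner
end

section
/- For every k ≥ 4, the weighted directed graph G_w(ℓ) has a k-spanner of cost 0 if and only if the strings a and b are disjoint. -/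
/-!
A spanner of cost 0 uses no edge of `D`, and outside `D` the only ways from `x_i` to `y_j` are
`x_i → x¹_i → x²_j → y²_j → y_j`, which needs `a_ij = 0`, and `x_i → x¹_i → y¹_i → y²_j → y_j`,
which needs `b_ij = 0`. Both have length 4, so when `a` and `b` are disjoint the set of all
weight-0 edges is a `k`-spanner for every `k ≥ 4`, and otherwise some edge of `D` cannot be spanned
at cost 0.
-/

namespace SpannerW

/-- Vertices of the weighted directed graph `G_w(ℓ)`. -/
inductive V : Type
  | x1 : ℕ → V
  | x2 : ℕ → V
  | y1 : ℕ → V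
  | y2 : ℕ → V
  | xx : ℕ → V
  | yy : ℕ → V
  deriving DecidableEq

/-- The directed edges of `G_w(ℓ)` (with input strings `a`, `b`, where
`a i j = true` means `a_{ij} = 1`). -/
def Edge (ℓ : ℕ) (a b : ℕ → ℕ → Bool) : V → V → Prop := fun u w =>
  (∃ i, 1 ≤ i ∧ i ≤ ℓ ∧ u = V.x1 i ∧ w = V.y1 i) ∨
  (∃ i, 1 ≤ i ∧ i ≤ ℓ ∧ u = V.x2 i ∧ w = V.y2 i) ∨
  (∃ i, 1 ≤ i ∧ i ≤ ℓ ∧ u = V.xx i ∧ w = V.x1 i) ∨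
  (∃ i, 1 ≤ i ∧ i ≤ ℓ ∧ u = V.y2 i ∧ w = V.yy i) ∨
  (∃ i j, 1 ≤ i ∧ i ≤ ℓ ∧ 1 ≤ j ∧ j ≤ ℓ ∧ u = V.xx i ∧ w = V.yy j) ∨
  (∃ i j, 1 ≤ i ∧ i ≤ ℓ ∧ 1 ≤ j ∧ j ≤ ℓ ∧ a i j = false ∧ u = V.x1 i ∧ w = V.x2 j) ∨
  (∃ i j, 1 ≤ i ∧ i ≤ ℓ ∧ 1 ≤ j ∧ j ≤ ℓ ∧ b i j = false ∧ u = V.y1 i ∧ w = V.y2 j)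

/-- Membership in the complete bipartite part `D` of `G_w(ℓ)`. -/
def InD (ℓ : ℕ) : V → V → Prop := fun u w =>
  ∃ i j, 1 ≤ i ∧ i ≤ ℓ ∧ 1 ≤ j ∧ j ≤ ℓ ∧ u = V.xx i ∧ w = V.yy j

open scoped Classical in
/-- The weight of an edge of `G_w(ℓ)`: 1 on edges of `D`, 0 elsewhere. -/
noncomputable def weight (ℓ : ℕ) (u w : V) : ℕ := if InD ℓ u w then 1 else 0

/-- The cost of a set of edges: the sum of the weights of its edges. -/
noncomputable def cost (ℓ : ℕ) (H : Set (V × V)) : ℕ := ∑ᶠ p ∈ H, weight ℓ p.1 p.2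

/-- A directed walk of a given length with all edges satisfying `E`. -/
inductive Walk (E : V → V → Prop) : V → V → ℕ → Prop
  | nil (v : V) : Walk E v v 0
  | cons {u v w : V} {n : ℕ} : E u v → Walk E v w n → Walk E u w (n + 1)

/-- `H` is a `k`-spanner of `G_w(ℓ)`. -/
def IsSpanner (ℓ k : ℕ) (a b : ℕ → ℕ → Bool) (H : Set (V × V)) : Prop :=
  (∀ p ∈ H, Edge ℓ a b p.1 p.2) ∧
  (∀ u w, Edge ℓ a b u w → ∃ n, n ≤ k ∧ Walk (fun x y => (x, y) ∈ H) u w n)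


lemma weight_eq_zero_iff {ℓ : ℕ} {u w : V} : weight ℓ u w = 0 ↔ ¬ InD ℓ u w := by
  simp [weight]

lemma finite_support_weight (ℓ : ℕ) :
    (Function.support fun p : V × V => weight ℓ p.1 p.2).Finite := by
  refine (((Set.finite_Icc 1 ℓ).prod (Set.finite_Icc 1 ℓ)).image
    (fun q : ℕ × ℕ => (V.xx q.1, V.yy q.2))).subset ?_
  rintro ⟨u, w⟩ hp
  obtain ⟨i, j, hi1, hi2, hj1, hj2, rfl, rfl⟩ : InD ℓ u w := by
    simpa [weight_eq_zero_iff] using hp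
  exact ⟨(i, j), ⟨⟨hi1, hi2⟩, hj1, hj2⟩, rfl⟩

lemma cost_eq_zero_iff {ℓ : ℕ} {H : Set (V × V)} :
    cost ℓ H = 0 ↔ ∀ p ∈ H, ¬ InD ℓ p.1 p.2 := by
  have hfin := (finite_support_weight ℓ).subset (Set.inter_subset_right (s := H))
  rw [cost, finsum_mem_eq_sum _ hfin, Finset.sum_eq_zero_iff]
  simp only [Set.Finite.mem_toFinset, Set.mem_inter_iff, Function.mem_support]
  exact ⟨fun h p hp => weight_eq_zero_iff.mp (by_contra fun hw => hw (h p ⟨hp, hw⟩)),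
    fun h p hp => weight_eq_zero_iff.mpr (h p hp.1)⟩

lemma Walk.invariant {E : V → V → Prop} {S : V → Prop} (hS : ∀ u v, E u v → S u → S v)
    {u w : V} {n : ℕ} (hw : Walk E u w n) (hu : S u) : S w := by
  induction hw with
  | nil => exact hu
  | cons huv _ ih => exact ih (hS _ _ huv hu)

def zeroEdges (ℓ : ℕ) (a b : ℕ → ℕ → Bool) : Set (V × V) :=
  {p | Edge ℓ a b p.1 p.2 ∧ ¬ InD ℓ p.1 p.2}

/-- A superset of the vertices reachable from `x_i` along edges outside `D`, closed under such
edges; at `y_j` it records that `a_ij = 0` or `b_ij = 0`. -/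
def ReachableOutsideD (a b : ℕ → ℕ → Bool) (i : ℕ) : V → Prop
  | .xx i' | .x1 i' | .y1 i' => i' = i
  | .x2 m => a i m = false
  | .y2 m | .yy m => a i m = false ∨ b i m = false

lemma ReachableOutsideD.of_mem_zeroEdges {ℓ : ℕ} {a b : ℕ → ℕ → Bool} {i : ℕ} {u v : V}
    (huv : (u, v) ∈ zeroEdges ℓ a b) (hu : ReachableOutsideD a b i u) :
    ReachableOutsideD a b i v := by
  obtain ⟨hE, hD⟩ := huv
  rcases hE with ⟨_, _, _, rfl, rfl⟩ | ⟨_, _, _, rfl, rfl⟩ | ⟨_, _, _, rfl, rfl⟩ |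
    ⟨_, _, _, rfl, rfl⟩ | hDedge |
    ⟨_, _, _, _, _, _, _, rfl, rfl⟩ | ⟨_, _, _, _, _, _, _, rfl, rfl⟩
  all_goals first
    | exact absurd hDedge hD
    | simp_all [ReachableOutsideD]

lemma not_both_true_of_walk_zeroEdges {ℓ : ℕ} {a b : ℕ → ℕ → Bool} {E : V → V → Prop}
    (hE : ∀ u v, E u v → (u, v) ∈ zeroEdges ℓ a b) {i j n : ℕ}
    (hw : Walk E (V.xx i) (V.yy j) n) : a i j = false ∨ b i j = false :=
  hw.invariant (S := ReachableOutsideD a b i)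
    (fun _ _ huv => ReachableOutsideD.of_mem_zeroEdges (hE _ _ huv)) rfl

lemma isSpanner_zeroEdges {ℓ k : ℕ} {a b : ℕ → ℕ → Bool} (hk : 4 ≤ k)
    (hdisj : ¬ ∃ i j, 1 ≤ i ∧ i ≤ ℓ ∧ 1 ≤ j ∧ j ≤ ℓ ∧ a i j = true ∧ b i j = true) :
    IsSpanner ℓ k a b (zeroEdges ℓ a b) := by
  refine ⟨fun p hp => hp.1, fun u w hE => ?_⟩
  by_cases hD : InD ℓ u w
  · obtain ⟨i, j, hi1, hi2, hj1, hj2, rfl, rfl⟩ := hD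
    have hab : a i j = false ∨ b i j = false := by
      by_contra h
      simp only [not_or, Bool.not_eq_false] at h
      exact hdisj ⟨i, j, hi1, hi2, hj1, hj2, h⟩
    have hx : (V.xx i, V.x1 i) ∈ zeroEdges ℓ a b := by simp [zeroEdges, Edge, InD, *]
    have hy : (V.y2 j, V.yy j) ∈ zeroEdges ℓ a b := by simp [zeroEdges, Edge, InD, *]
    refine ⟨4, hk, ?_⟩
    rcases hab with ha | hb
    · exact .cons hx (.cons (v := V.x2 j) (by simp [zeroEdges, Edge, InD, *])
        (.cons (by simp [zeroEdges, Edge, InD, *]) (.cons hy (.nil _))))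
    · exact .cons hx (.cons (v := V.y1 i) (by simp [zeroEdges, Edge, InD, *])
        (.cons (by simp [zeroEdges, Edge, InD, *]) (.cons hy (.nil _))))
  · exact ⟨1, by omega, .cons ⟨hE, hD⟩ (.nil _)⟩

theorem statement6_general (ℓ k : ℕ) (hk : 4 ≤ k) (a b : ℕ → ℕ → Bool) :
    (∃ H : Set (V × V), IsSpanner ℓ k a b H ∧ cost ℓ H = 0) ↔
      ¬ ∃ i j, 1 ≤ i ∧ i ≤ ℓ ∧ 1 ≤ j ∧ j ≤ ℓ ∧ a i j = true ∧ b i j = true := by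
  constructor
  · rintro ⟨H, ⟨hHE, hHwalk⟩, hcost⟩ ⟨i, j, hi1, hi2, hj1, hj2, ha, hb⟩
    have hDedge : Edge ℓ a b (V.xx i) (V.yy j) :=
      .inr <| .inr <| .inr <| .inr <| .inl ⟨i, j, hi1, hi2, hj1, hj2, rfl, rfl⟩
    obtain ⟨n, -, hw⟩ := hHwalk _ _ hDedge
    have hzero : ∀ u v, (u, v) ∈ H → (u, v) ∈ zeroEdges ℓ a b :=
      fun u v huv => ⟨hHE _ huv, cost_eq_zero_iff.mp hcost _ huv⟩
    simpa [ha, hb] using not_both_true_of_walk_zeroEdges hzero hw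
  · exact fun hdisj =>
      ⟨zeroEdges ℓ a b, isSpanner_zeroEdges hk hdisj, cost_eq_zero_iff.mpr fun _ hp => hp.2⟩

/-- For every `k ≥ 4`, the weighted directed graph `G_w(ℓ)` has a
`k`-spanner of cost 0 if and only if the strings `a` and `b` are disjoint. -/
theorem statement6 (ℓ k : ℕ) (hℓ : 1 ≤ ℓ) (hk : 4 ≤ k) (a b : ℕ → ℕ → Bool) :
    (∃ H : Set (V × V), IsSpanner ℓ k a b H ∧ cost ℓ H = 0) ↔
      ¬ ∃ i j, 1 ≤ i ∧ i ≤ ℓ ∧ 1 ≤ j ∧ j ≤ ℓ ∧ a i j = true ∧ b i j = true :=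
  statement6_general ℓ k hk a b

end SpannerW
end

section
/- For every fixed k ≥ 4, the weighted undirected graph G_w^k(ℓ) has a k-spanner of cost 0 if and only if the strings a and b are disjoint. -/
namespace SpannerWU

/-- Vertices of the weighted undirected graph `G_w^k(ℓ)`.  `yp i t` is the extra path
vertex `y^t_i` (used for `3 ≤ t ≤ k-2`). -/
inductive V : Type
  | x1 : ℕ → V
  | x2 : ℕ → V
  | y1 : ℕ → V
  | y2 : ℕ → V
  | xx : ℕ → V
  | yy : ℕ → V
  | yp : ℕ → ℕ → V
  deriving DecidableEq

/-- The `t`-th vertex (for `2 ≤ t ≤ k-1`) of the path of length `k-3` replacing the edge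
`{y²_i, y_i}`: `pv k i 2 = y²_i`, `pv k i (k-1) = y_i`, and the intermediate vertices are
`y³_i, …, y^{k-2}_i`. -/
def pv (k i t : ℕ) : V :=
  if t ≤ 2 then V.y2 i else if k - 2 < t then V.yy i else V.yp i t

/-- The (undirected) edges of `G_w^k(ℓ)` as a set of unordered pairs. -/
def Edges (ℓ k : ℕ) (a b : ℕ → ℕ → Bool) : Set (Sym2 V) :=
  {e | (∃ i, 1 ≤ i ∧ i ≤ ℓ ∧ e = s(V.x1 i, V.y1 i)) ∨
       (∃ i, 1 ≤ i ∧ i ≤ ℓ ∧ e = s(V.x2 i, V.y2 i)) ∨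
       (∃ i, 1 ≤ i ∧ i ≤ ℓ ∧ e = s(V.xx i, V.x1 i)) ∨
       (∃ i t, 1 ≤ i ∧ i ≤ ℓ ∧ 2 ≤ t ∧ t ≤ k - 2 ∧ e = s(pv k i t, pv k i (t + 1))) ∨
       (∃ i j, 1 ≤ i ∧ i ≤ ℓ ∧ 1 ≤ j ∧ j ≤ ℓ ∧ e = s(V.xx i, V.yy j)) ∨
       (∃ i j, 1 ≤ i ∧ i ≤ ℓ ∧ 1 ≤ j ∧ j ≤ ℓ ∧ a i j = false ∧ e = s(V.x1 i, V.x2 j)) ∨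
       (∃ i j, 1 ≤ i ∧ i ≤ ℓ ∧ 1 ≤ j ∧ j ≤ ℓ ∧ b i j = false ∧ e = s(V.y1 i, V.y2 j))}

/-- The complete bipartite part `D` of `G_w^k(ℓ)`. -/
def D (ℓ : ℕ) : Set (Sym2 V) :=
  {e | ∃ i j, 1 ≤ i ∧ i ≤ ℓ ∧ 1 ≤ j ∧ j ≤ ℓ ∧ e = s(V.xx i, V.yy j)}

open scoped Classical in
/-- The weight of an edge of `G_w^k(ℓ)`: 1 on edges of `D`, 0 elsewhere. -/
noncomputable def weight (ℓ : ℕ) (e : Sym2 V) : ℕ := if e ∈ D ℓ then 1 else 0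

/-- The cost of a set of edges: the sum of the weights of its edges. -/
noncomputable def cost (ℓ : ℕ) (H : Set (Sym2 V)) : ℕ := ∑ᶠ e ∈ H, weight ℓ e

/-- An undirected walk of a given length using only edges of `H`. -/
inductive Walk (H : Set (Sym2 V)) : V → V → ℕ → Prop
  | nil (v : V) : Walk H v v 0
  | cons {u v w : V} {n : ℕ} : s(u, v) ∈ H → Walk H v w n → Walk H u w (n + 1)

/-- `H` is a `k`-spanner of `G_w^k(ℓ)`: a subset of the edges such that every edge `{u,w}`
of the graph is connected by a path of length at most `k` of edges of `H`. -/
def IsSpanner (ℓ k : ℕ) (a b : ℕ → ℕ → Bool) (H : Set (Sym2 V)) : Prop :=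
  H ⊆ Edges ℓ k a b ∧
  (∀ u w : V, s(u, w) ∈ Edges ℓ k a b → ∃ n, n ≤ k ∧ Walk H u w n)


def L (k : ℕ) : V → ℕ
  | V.x1 _ => 1
  | V.x2 _ => 2
  | V.y1 _ => 2
  | V.y2 _ => 3
  | V.xx _ => 0
  | V.yy _ => k
  | V.yp _ t => t + 1

lemma pv_cases (k i t : ℕ) (hk : 4 ≤ k) (h2 : 2 ≤ t) (h3 : t ≤ k - 1) :
    (t = 2 ∧ pv k i t = V.y2 i) ∨ (3 ≤ t ∧ t ≤ k - 2 ∧ pv k i t = V.yp i t) ∨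
      (t = k - 1 ∧ pv k i t = V.yy i) := by
  unfold pv
  split_ifs with H1 H2
  · exact Or.inl ⟨by omega, rfl⟩
  · exact Or.inr (Or.inr ⟨by omega, rfl⟩)
  · exact Or.inr (Or.inl ⟨by omega, by omega, rfl⟩)

lemma L_pv (k i t : ℕ) (hk : 4 ≤ k) (h1 : 2 ≤ t) (h2 : t ≤ k - 1) : L k (pv k i t) = t + 1 := by
  rcases pv_cases k i t hk h1 h2 with ⟨h, hp⟩ | ⟨_, _, hp⟩ | ⟨h, hp⟩ <;> rw [hp] <;> simp [L] <;> omega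

lemma L_step {ℓ k : ℕ} {a b : ℕ → ℕ → Bool} (hk : 4 ≤ k) {u v : V}
    (he : s(u, v) ∈ Edges ℓ k a b) (hd : s(u, v) ∉ D ℓ) :
    L k v ≤ L k u + 1 ∧ L k u ≤ L k v + 1 := by
  rcases he with ⟨i,_,_,h⟩|⟨i,_,_,h⟩|⟨i,_,_,h⟩|⟨i,t,_,_,ht2,htk,h⟩|⟨i,j,h1,h2,h3,h4,h⟩|⟨i,j,_,_,_,_,_,h⟩|⟨i,j,_,_,_,_,_,h⟩
  · rw [Sym2.eq_iff] at h
    rcases h with ⟨rfl, rfl⟩ | ⟨rfl, rfl⟩ <;> simp [L]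
  · rw [Sym2.eq_iff] at h
    rcases h with ⟨rfl, rfl⟩ | ⟨rfl, rfl⟩ <;> simp [L]
  · rw [Sym2.eq_iff] at h
    rcases h with ⟨rfl, rfl⟩ | ⟨rfl, rfl⟩ <;> simp [L]
  · have e1 : L k (pv k i t) = t + 1 := L_pv k i t hk ht2 (by omega)
    have e2 : L k (pv k i (t+1)) = t + 2 := L_pv k i (t+1) hk (by omega) (by omega)
    rw [Sym2.eq_iff] at h
    rcases h with ⟨rfl, rfl⟩ | ⟨rfl, rfl⟩ <;> omega
  · exact absurd ⟨i, j, h1, h2, h3, h4, h⟩ hd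
  · rw [Sym2.eq_iff] at h
    rcases h with ⟨rfl, rfl⟩ | ⟨rfl, rfl⟩ <;> simp [L]
  · rw [Sym2.eq_iff] at h
    rcases h with ⟨rfl, rfl⟩ | ⟨rfl, rfl⟩ <;> simp [L]

lemma walk_L_bound {H : Set (Sym2 V)} {ℓ k : ℕ} {a b : ℕ → ℕ → Bool} (hk : 4 ≤ k)
    (hsub : H ⊆ Edges ℓ k a b) (hD : ∀ e ∈ H, e ∉ D ℓ) :
    ∀ {u w n}, Walk H u w n → L k w ≤ L k u + n := by
  intro u w n hw
  induction hw with
  | nil => simp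
  | cons he _ ih =>
    have := L_step hk (hsub he) (hD _ he)
    omega


lemma pv_ne_xx (k i t r : ℕ) (hk : 4 ≤ k) (h2 : 2 ≤ t) (h3 : t ≤ k - 1) : pv k i t ≠ V.xx r := by
  rcases pv_cases k i t hk h2 h3 with ⟨_, hp⟩ | ⟨_, _, hp⟩ | ⟨_, hp⟩ <;> simp [hp]

lemma step_xx {ℓ k : ℕ} {a b : ℕ → ℕ → Bool} {i : ℕ} {v : V} (hk : 4 ≤ k)
    (he : s(V.xx i, v) ∈ Edges ℓ k a b) (hd : s(V.xx i, v) ∉ D ℓ) : v = V.x1 i := by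
  rcases he with ⟨i',_,_,h⟩|⟨i',_,_,h⟩|⟨i',_,_,h⟩|⟨i',t',_,_,ht2,htk,h⟩|⟨i',j',h1,h2,h3,h4,h⟩|⟨i',j',_,_,_,_,_,h⟩|⟨i',j',_,_,_,_,_,h⟩
  · simp [Sym2.eq_iff] at h
  · simp [Sym2.eq_iff] at h
  · rw [Sym2.eq_iff] at h
    rcases h with ⟨h1, rfl⟩ | ⟨h1, h2⟩
    · cases h1; rfl
    · simp at h1
  · rcases pv_cases k i' t' hk ht2 (by omega) with ⟨_,hp⟩|⟨_,_,hp⟩|⟨_,hp⟩ <;>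
      rcases pv_cases k i' (t'+1) hk (by omega) (by omega) with ⟨_,hq⟩|⟨_,_,hq⟩|⟨_,hq⟩ <;>
      rw [hp, hq] at h <;> simp [Sym2.eq_iff] at h
  · exact absurd ⟨i', j', h1, h2, h3, h4, h⟩ hd
  · simp [Sym2.eq_iff] at h
  · simp [Sym2.eq_iff] at h

lemma step_x1 {ℓ k : ℕ} {a b : ℕ → ℕ → Bool} {i : ℕ} {v : V} (hk : 4 ≤ k)
    (he : s(V.x1 i, v) ∈ Edges ℓ k a b) :
    v = V.y1 i ∨ v = V.xx i ∨ ∃ p, 1 ≤ p ∧ p ≤ ℓ ∧ a i p = false ∧ v = V.x2 p := by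
  rcases he with ⟨i',_,_,h⟩|⟨i',_,_,h⟩|⟨i',_,_,h⟩|⟨i',t',_,_,ht2,htk,h⟩|⟨i',j',h1,h2,h3,h4,h⟩|⟨i',j',hp1,hp2,hp3,hp4,ha,h⟩|⟨i',j',_,_,_,_,_,h⟩
  · rw [Sym2.eq_iff] at h
    rcases h with ⟨h1, rfl⟩ | ⟨h1, h2⟩
    · cases h1; exact Or.inl rfl
    · simp at h1
  · simp [Sym2.eq_iff] at h
  · rw [Sym2.eq_iff] at h
    rcases h with ⟨h1, h2⟩ | ⟨h1, rfl⟩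
    · simp at h1
    · cases h1; exact Or.inr (Or.inl rfl)
  · rcases pv_cases k i' t' hk ht2 (by omega) with ⟨_,hp⟩|⟨_,_,hp⟩|⟨_,hp⟩ <;>
      rcases pv_cases k i' (t'+1) hk (by omega) (by omega) with ⟨_,hq⟩|⟨_,_,hq⟩|⟨_,hq⟩ <;>
      rw [hp, hq] at h <;> simp [Sym2.eq_iff] at h
  · simp [Sym2.eq_iff] at h
  · rw [Sym2.eq_iff] at h
    rcases h with ⟨h1, rfl⟩ | ⟨h1, h2⟩
    · cases h1; exact Or.inr (Or.inr ⟨j', hp3, hp4, ha, rfl⟩)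
    · simp at h1
  · simp [Sym2.eq_iff] at h

lemma step_y1 {ℓ k : ℕ} {a b : ℕ → ℕ → Bool} {i : ℕ} {v : V} (hk : 4 ≤ k)
    (he : s(V.y1 i, v) ∈ Edges ℓ k a b) :
    v = V.x1 i ∨ ∃ p, 1 ≤ p ∧ p ≤ ℓ ∧ b i p = false ∧ v = V.y2 p := by
  rcases he with ⟨i',_,_,h⟩|⟨i',_,_,h⟩|⟨i',_,_,h⟩|⟨i',t',_,_,ht2,htk,h⟩|⟨i',j',h1,h2,h3,h4,h⟩|⟨i',j',_,_,_,_,_,h⟩|⟨i',j',hp1,hp2,hp3,hp4,hb,h⟩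
  · rw [Sym2.eq_iff] at h
    rcases h with ⟨h1, h2⟩ | ⟨h1, rfl⟩
    · simp at h1
    · cases h1; exact Or.inl rfl
  · simp [Sym2.eq_iff] at h
  · simp [Sym2.eq_iff] at h
  · rcases pv_cases k i' t' hk ht2 (by omega) with ⟨_,hp⟩|⟨_,_,hp⟩|⟨_,hp⟩ <;>
      rcases pv_cases k i' (t'+1) hk (by omega) (by omega) with ⟨_,hq⟩|⟨_,_,hq⟩|⟨_,hq⟩ <;>
      rw [hp, hq] at h <;> simp [Sym2.eq_iff] at h
  · simp [Sym2.eq_iff] at h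
  · simp [Sym2.eq_iff] at h
  · rw [Sym2.eq_iff] at h
    rcases h with ⟨h1, rfl⟩ | ⟨h1, h2⟩
    · cases h1; exact Or.inr ⟨j', hp3, hp4, hb, rfl⟩
    · simp at h1

lemma step_x2 {ℓ k : ℕ} {a b : ℕ → ℕ → Bool} {i : ℕ} {v : V} (hk : 4 ≤ k)
    (he : s(V.x2 i, v) ∈ Edges ℓ k a b) :
    v = V.y2 i ∨ ∃ q, 1 ≤ q ∧ q ≤ ℓ ∧ a q i = false ∧ v = V.x1 q := by
  rcases he with ⟨i',_,_,h⟩|⟨i',_,_,h⟩|⟨i',_,_,h⟩|⟨i',t',_,_,ht2,htk,h⟩|⟨i',j',h1,h2,h3,h4,h⟩|⟨i',j',hp1,hp2,hp3,hp4,ha,h⟩|⟨i',j',_,_,_,_,_,h⟩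
  · simp [Sym2.eq_iff] at h
  · rw [Sym2.eq_iff] at h
    rcases h with ⟨h1, rfl⟩ | ⟨h1, h2⟩
    · cases h1; exact Or.inl rfl
    · simp at h1
  · simp [Sym2.eq_iff] at h
  · rcases pv_cases k i' t' hk ht2 (by omega) with ⟨_,hp⟩|⟨_,_,hp⟩|⟨_,hp⟩ <;>
      rcases pv_cases k i' (t'+1) hk (by omega) (by omega) with ⟨_,hq⟩|⟨_,_,hq⟩|⟨_,hq⟩ <;>
      rw [hp, hq] at h <;> simp [Sym2.eq_iff] at h
  · simp [Sym2.eq_iff] at h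
  · rw [Sym2.eq_iff] at h
    rcases h with ⟨h1, h2⟩ | ⟨h1, rfl⟩
    · simp at h1
    · cases h1; exact Or.inr ⟨i', hp1, hp2, ha, rfl⟩
  · simp [Sym2.eq_iff] at h

lemma step_y2 {ℓ k : ℕ} {a b : ℕ → ℕ → Bool} {i : ℕ} {v : V} (hk : 4 ≤ k)
    (he : s(V.y2 i, v) ∈ Edges ℓ k a b) :
    v = V.x2 i ∨ (∃ q, 1 ≤ q ∧ q ≤ ℓ ∧ b q i = false ∧ v = V.y1 q) ∨ v = pv k i 3 := by
  rcases he with ⟨i',_,_,h⟩|⟨i',_,_,h⟩|⟨i',_,_,h⟩|⟨i',t',_,_,ht2,htk,h⟩|⟨i',j',h1,h2,h3,h4,h⟩|⟨i',j',_,_,_,_,_,h⟩|⟨i',j',hp1,hp2,hp3,hp4,hb,h⟩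
  · simp [Sym2.eq_iff] at h
  · rw [Sym2.eq_iff] at h
    rcases h with ⟨h1, h2⟩ | ⟨h1, rfl⟩
    · simp at h1
    · cases h1; exact Or.inl rfl
  · simp [Sym2.eq_iff] at h
  · rw [Sym2.eq_iff] at h
    rcases h with ⟨h1, rfl⟩ | ⟨h1, rfl⟩
    · rcases pv_cases k i' t' hk ht2 (by omega) with ⟨ht2', hp⟩|⟨_,_,hp⟩|⟨_,hp⟩ <;> rw [hp] at h1
      · simp at h1
        subst h1
        exact Or.inr (Or.inr (by rw [ht2']))
      · simp at h1
      · simp at h1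
    · rcases pv_cases k i' (t'+1) hk (by omega) (by omega) with ⟨hq1,hq⟩|⟨_,_,hq⟩|⟨_,hq⟩ <;> rw [hq] at h1
      · omega
      · simp at h1
      · simp at h1
  · simp [Sym2.eq_iff] at h
  · simp [Sym2.eq_iff] at h
  · rw [Sym2.eq_iff] at h
    rcases h with ⟨h1, h2⟩ | ⟨h1, rfl⟩
    · simp at h1
    · cases h1; exact Or.inr (Or.inl ⟨i', hp1, hp2, hb, rfl⟩)

lemma step_yp {ℓ k : ℕ} {a b : ℕ → ℕ → Bool} {i t : ℕ} {v : V} (hk : 4 ≤ k)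
    (h3 : 3 ≤ t) (h4 : t ≤ k - 2)
    (he : s(V.yp i t, v) ∈ Edges ℓ k a b) :
    v = pv k i (t + 1) ∨ v = pv k i (t - 1) := by
  rcases he with ⟨i',_,_,h⟩|⟨i',_,_,h⟩|⟨i',_,_,h⟩|⟨i',t',_,_,ht2,htk,h⟩|⟨i',j',h1,h2,h3',h4',h⟩|⟨i',j',_,_,_,_,_,h⟩|⟨i',j',_,_,_,_,_,h⟩
  · simp [Sym2.eq_iff] at h
  · simp [Sym2.eq_iff] at h
  · simp [Sym2.eq_iff] at h
  · rw [Sym2.eq_iff] at h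
    rcases h with ⟨h1, rfl⟩ | ⟨h1, rfl⟩
    · rcases pv_cases k i' t' hk ht2 (by omega) with ⟨_,hp⟩|⟨_,_,hp⟩|⟨_,hp⟩ <;> rw [hp] at h1
      · simp at h1
      · simp at h1
        obtain ⟨rfl, rfl⟩ := h1
        exact Or.inl rfl
      · simp at h1
    · rcases pv_cases k i' (t'+1) hk (by omega) (by omega) with ⟨hq1,hq⟩|⟨_,_,hq⟩|⟨_,hq⟩ <;> rw [hq] at h1
      · omega
      · simp at h1
        obtain ⟨rfl, h1⟩ := h1
        have ht' : t' = t - 1 := by omega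
        rw [← ht']
        exact Or.inr rfl
      · simp at h1
  · simp [Sym2.eq_iff] at h
  · simp [Sym2.eq_iff] at h
  · simp [Sym2.eq_iff] at h

lemma pathA {H : Set (Sym2 V)} {ℓ k : ℕ} {a b : ℕ → ℕ → Bool} {j : ℕ} (hk : 4 ≤ k)
    (hsub : H ⊆ Edges ℓ k a b) (hD : ∀ e ∈ H, e ∉ D ℓ) :
    ∀ n t q, 2 ≤ t → t ≤ k - 2 → t + 1 + n = k → Walk H (pv k q t) (V.yy j) n → q = j := by
  intro n
  induction n with
  | zero => intro t q h2 h3 hn _; omega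
  | succ n ih =>
    intro t q h2 h3 hn hw
    generalize hgen : pv k q t = u at hw
    cases hw with
    | @cons _ v _ _ he hw' =>
      rw [← hgen] at he
      have hb : k ≤ L k v + n := by
        have := walk_L_bound hk hsub hD hw'
        simpa [L] using this
      rcases pv_cases k q t hk h2 (by omega) with ⟨rfl, hp⟩ | ⟨h3', h4', hp⟩ | ⟨ht, _⟩
      · -- t = 2, pv = y2 q
        rw [hp] at he
        rcases step_y2 hk (hsub he) with rfl | ⟨r, _, _, _, rfl⟩ | rfl
        · simp [L] at hb; omega
        · simp [L] at hb; omega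
        · by_cases h5 : 3 ≤ k - 2
          · exact ih 3 q (by omega) h5 (by omega) hw'
          · -- k = 4, so pv k q 3 = yy q and n = 0
            have hn0 : n = 0 := by omega
            subst hn0
            have hyy : pv k q 3 = V.yy q := by
              rcases pv_cases k q 3 hk (by omega) (by omega) with ⟨h,_⟩|⟨_,h,_⟩|⟨_,h⟩
              · omega
              · omega
              · exact h
            rw [hyy] at hw'
            cases hw'
            rfl
      · -- 3 ≤ t ≤ k-2, pv = yp q t
        rw [hp] at he
        rcases step_yp hk h3' h4' (hsub he) with rfl | rfl
        · by_cases h5 : t + 1 ≤ k - 2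
          · exact ih (t+1) q (by omega) h5 (by omega) hw'
          · have hn0 : n = 0 := by omega
            subst hn0
            have hyy : pv k q (t+1) = V.yy q := by
              rcases pv_cases k q (t+1) hk (by omega) (by omega) with ⟨h,_⟩|⟨_,h,_⟩|⟨_,h⟩
              · omega
              · omega
              · exact h
            rw [hyy] at hw'
            cases hw'
            rfl
        · have hL : L k (pv k q (t-1)) = t := by
            have := L_pv k q (t-1) hk (by omega) (by omega)
            omega
          omega
      · omega

lemma forward_main {H : Set (Sym2 V)} {ℓ k : ℕ} {a b : ℕ → ℕ → Bool} {i j n : ℕ} (hk : 4 ≤ k)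
    (hsub : H ⊆ Edges ℓ k a b) (hD : ∀ e ∈ H, e ∉ D ℓ) (hn : n ≤ k)
    (hw : Walk H (V.xx i) (V.yy j) n) :
    a i j = false ∨ b i j = false := by
  have hb0 : k ≤ n := by
    have := walk_L_bound hk hsub hD hw
    simpa [L] using this
  cases hw with
  | @cons _ v _ _ he hw' =>
    rename_i n₁
    obtain rfl := step_xx hk (hsub he) (hD _ he)
    cases hw' with
    | @cons _ v2 _ _ he2 hw2 =>
      rename_i n₂
      rcases step_x1 hk (hsub he2) with rfl | rfl | ⟨p, hp1, hp2, ha, rfl⟩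
      · -- v2 = y1 i
        cases hw2 with
        | @cons _ v3 _ _ he3 hw3 =>
          rename_i n₃
          rcases step_y1 hk (hsub he3) with rfl | ⟨p, hp1, hp2, hbp, rfl⟩
          · have := walk_L_bound hk hsub hD hw3
            simp [L] at this
            omega
          · have hpeq : pv k p 2 = V.y2 p := by simp [pv]
            have hpj : p = j := pathA hk hsub hD n₃ 2 p (le_refl 2) (by omega) (by omega)
              (by rw [hpeq]; exact hw3)
            subst hpj
            exact Or.inr hbp
      · -- v2 = xx i
        have := walk_L_bound hk hsub hD hw2
        simp [L] at this
        omega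
      · -- v2 = x2 p
        cases hw2 with
        | @cons _ v3 _ _ he3 hw3 =>
          rename_i n₃
          rcases step_x2 hk (hsub he3) with rfl | ⟨q, hq1, hq2, haq, rfl⟩
          · have hpeq : pv k p 2 = V.y2 p := by simp [pv]
            have hpj : p = j := pathA hk hsub hD n₃ 2 p (le_refl 2) (by omega) (by omega)
              (by rw [hpeq]; exact hw3)
            subst hpj
            exact Or.inl ha
          · have := walk_L_bound hk hsub hD hw3
            simp [L] at this
            omega

lemma D_finite (ℓ : ℕ) : (D ℓ).Finite := by
  apply Set.Finite.subset
    (Set.Finite.image (fun p : ℕ × ℕ => s(V.xx p.1, V.yy p.2))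
      ((Set.finite_Icc 1 ℓ).prod (Set.finite_Icc 1 ℓ)))
  rintro e ⟨i, j, h1, h2, h3, h4, rfl⟩
  exact ⟨(i, j), ⟨⟨h1, h2⟩, ⟨h3, h4⟩⟩, rfl⟩

lemma cost_zero_iff {ℓ : ℕ} (H : Set (Sym2 V)) : cost ℓ H = 0 ↔ ∀ e ∈ H, e ∉ D ℓ := by
  classical
  have hsupp : Function.support (weight ℓ) ⊆ D ℓ := by
    intro e he
    by_contra hcon
    exact he (by simp [weight, hcon])
  have hfin : (H ∩ Function.support (weight ℓ)).Finite :=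
    Set.Finite.subset (D_finite ℓ) (fun e he => hsupp he.2)
  rw [cost, finsum_mem_eq_sum _ hfin]
  constructor
  · intro h0 e heH heD
    have hmem : e ∈ hfin.toFinset := by
      rw [Set.Finite.mem_toFinset]
      exact ⟨heH, by simp [weight, heD]⟩
    have := (Finset.sum_eq_zero_iff).mp h0 e hmem
    simp [weight, heD] at this
  · intro h
    apply Finset.sum_eq_zero
    intro e he
    rw [Set.Finite.mem_toFinset] at he
    simp [weight, h e he.1]

lemma walk_snoc {H : Set (Sym2 V)} : ∀ {u v n}, Walk H u v n → ∀ {w}, s(v, w) ∈ H →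
    Walk H u w (n + 1) := by
  intro u v n h
  induction h with
  | nil v => intro w hw; exact Walk.cons hw (Walk.nil w)
  | cons he _ ih => intro w hw; exact Walk.cons he (ih hw)

lemma walk_rev {H : Set (Sym2 V)} : ∀ {u v n}, Walk H u v n → Walk H v u n := by
  intro u v n h
  induction h with
  | nil v => exact Walk.nil v
  | cons he _ ih => exact walk_snoc ih (by rwa [Sym2.eq_swap])

lemma walk_path {H : Set (Sym2 V)} {ℓ k : ℕ} {a b : ℕ → ℕ → Bool} (hk : 4 ≤ k) {q : ℕ}
    (hq1 : 1 ≤ q) (hq2 : q ≤ ℓ)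
    (hH : ∀ e ∈ Edges ℓ k a b, e ∉ D ℓ → e ∈ H) :
    ∀ m, m ≤ k - 3 → Walk H (pv k q (k - 1 - m)) (V.yy q) m := by
  intro m
  induction m with
  | zero =>
    intro _
    have hyy : pv k q (k - 1 - 0) = V.yy q := by
      rcases pv_cases k q (k-1) hk (by omega) (le_refl _) with ⟨h,_⟩|⟨_,h,_⟩|⟨_,hp⟩
      · omega
      · omega
      · simpa using hp
    rw [hyy]
    exact Walk.nil _
  | succ m ih =>
    intro hm
    have h1 : k - 1 - (m+1) = k - 2 - m := by omega
    have h2 : k - 2 - m + 1 = k - 1 - m := by omega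
    have hedge : s(pv k q (k - 2 - m), pv k q (k - 2 - m + 1)) ∈ H := by
      apply hH
      · exact Or.inr (Or.inr (Or.inr (Or.inl ⟨q, k - 2 - m, hq1, hq2, by omega, by omega, rfl⟩)))
      · rintro ⟨i', j', -, -, -, -, h⟩
        rw [Sym2.eq_iff] at h
        rcases h with ⟨h, -⟩ | ⟨-, h⟩
        · exact pv_ne_xx k q _ i' hk (by omega) (by omega) h
        · exact pv_ne_xx k q _ i' hk (by omega) (by omega) h
    rw [h1]
    have hw := ih (by omega)
    rw [← h2] at hw
    exact Walk.cons hedge hw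

lemma walk_D {H : Set (Sym2 V)} {ℓ k : ℕ} {a b : ℕ → ℕ → Bool} {i j : ℕ} (hk : 4 ≤ k)
    (hi1 : 1 ≤ i) (hi2 : i ≤ ℓ) (hj1 : 1 ≤ j) (hj2 : j ≤ ℓ)
    (hH : ∀ e ∈ Edges ℓ k a b, e ∉ D ℓ → e ∈ H)
    (hab : a i j = false ∨ b i j = false) :
    Walk H (V.xx i) (V.yy j) k := by
  have hpath : Walk H (V.y2 j) (V.yy j) (k - 3) := by
    have h := walk_path hk hj1 hj2 hH (k - 3) (le_refl _)
    have h2 : k - 1 - (k - 3) = 2 := by omega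
    rw [h2] at h
    have hp2 : pv k j 2 = V.y2 j := by simp [pv]
    rwa [hp2] at h
  have e1 : s(V.xx i, V.x1 i) ∈ H := by
    apply hH _ (Or.inr (Or.inr (Or.inl ⟨i, hi1, hi2, rfl⟩)))
    rintro ⟨i', j', -, -, -, -, h⟩
    rw [Sym2.eq_iff] at h
    rcases h with ⟨h1, h2⟩ | ⟨h1, h2⟩ <;> simp at h1 h2
  rcases hab with ha | hb
  · have e2 : s(V.x1 i, V.x2 j) ∈ H := by
      apply hH _ (Or.inr (Or.inr (Or.inr (Or.inr (Or.inr (Or.inl ⟨i, j, hi1, hi2, hj1, hj2, ha, rfl⟩))))))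
      rintro ⟨i', j', -, -, -, -, h⟩
      rw [Sym2.eq_iff] at h
      rcases h with ⟨h1, h2⟩ | ⟨h1, h2⟩ <;> simp at h1 h2
    have e3 : s(V.x2 j, V.y2 j) ∈ H := by
      apply hH _ (Or.inr (Or.inl ⟨j, hj1, hj2, rfl⟩))
      rintro ⟨i', j', -, -, -, -, h⟩
      rw [Sym2.eq_iff] at h
      rcases h with ⟨h1, h2⟩ | ⟨h1, h2⟩ <;> simp at h1 h2
    have hw : Walk H (V.xx i) (V.yy j) (k - 3 + 1 + 1 + 1) :=
      Walk.cons e1 (Walk.cons e2 (Walk.cons e3 hpath))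
    have hkk : k - 3 + 1 + 1 + 1 = k := by omega
    rwa [hkk] at hw
  · have e2 : s(V.x1 i, V.y1 i) ∈ H := by
      apply hH _ (Or.inl ⟨i, hi1, hi2, rfl⟩)
      rintro ⟨i', j', -, -, -, -, h⟩
      rw [Sym2.eq_iff] at h
      rcases h with ⟨h1, h2⟩ | ⟨h1, h2⟩ <;> simp at h1 h2
    have e3 : s(V.y1 i, V.y2 j) ∈ H := by
      apply hH _ (Or.inr (Or.inr (Or.inr (Or.inr (Or.inr (Or.inr ⟨i, j, hi1, hi2, hj1, hj2, hb, rfl⟩))))))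
      rintro ⟨i', j', -, -, -, -, h⟩
      rw [Sym2.eq_iff] at h
      rcases h with ⟨h1, h2⟩ | ⟨h1, h2⟩ <;> simp at h1 h2
    have hw : Walk H (V.xx i) (V.yy j) (k - 3 + 1 + 1 + 1) :=
      Walk.cons e1 (Walk.cons e2 (Walk.cons e3 hpath))
    have hkk : k - 3 + 1 + 1 + 1 = k := by omega
    rwa [hkk] at hw


/-- For every fixed `k ≥ 4`, the weighted undirected graph `G_w^k(ℓ)`
has a `k`-spanner of cost 0 if and only if the strings `a` and `b` are disjoint. -/
theorem statement7 (ℓ k : ℕ) (hℓ : 1 ≤ ℓ) (hk : 4 ≤ k) (a b : ℕ → ℕ → Bool) :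
    (∃ H : Set (Sym2 V), IsSpanner ℓ k a b H ∧ cost ℓ H = 0) ↔
      ¬ ∃ i j, 1 ≤ i ∧ i ≤ ℓ ∧ 1 ≤ j ∧ j ≤ ℓ ∧ a i j = true ∧ b i j = true := by
  constructor
  · rintro ⟨H, ⟨hsub, hspan⟩, hcost⟩ ⟨i, j, hi1, hi2, hj1, hj2, ha, hb⟩
    have hD := (cost_zero_iff H).mp hcost
    obtain ⟨n, hn, hw⟩ := hspan (V.xx i) (V.yy j)
      (Or.inr (Or.inr (Or.inr (Or.inr (Or.inl ⟨i, j, hi1, hi2, hj1, hj2, rfl⟩)))))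
    rcases forward_main hk hsub hD hn hw with h | h <;> simp_all
  · intro hdisj
    refine ⟨Edges ℓ k a b \ D ℓ, ⟨Set.diff_subset, ?_⟩, ?_⟩
    · intro u w he
      by_cases hd : s(u, w) ∈ D ℓ
      · obtain ⟨i, j, hi1, hi2, hj1, hj2, heq⟩ := hd
        have hab : a i j = false ∨ b i j = false := by
          cases hai : a i j
          · exact Or.inl rfl
          · cases hbi : b i j
            · exact Or.inr rfl
            · exact absurd ⟨i, j, hi1, hi2, hj1, hj2, hai, hbi⟩ hdisj
        have hH : ∀ e ∈ Edges ℓ k a b, e ∉ D ℓ → e ∈ Edges ℓ k a b \ D ℓ :=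
          fun e h1 h2 => ⟨h1, h2⟩
        have hwalk := walk_D hk hi1 hi2 hj1 hj2 hH hab
        rw [Sym2.eq_iff] at heq
        rcases heq with ⟨rfl, rfl⟩ | ⟨rfl, rfl⟩
        · exact ⟨k, le_refl k, hwalk⟩
        · exact ⟨k, le_refl k, walk_rev hwalk⟩
      · exact ⟨1, by omega, Walk.cons ⟨he, hd⟩ (Walk.nil w)⟩
    · exact (cost_zero_iff _).mpr (fun e he => he.2)

end SpannerWU
end

section
/- The minimum cost of a 2-spanner of the weighted graph G_S is exactly equal to the minimum size of a vertex cover of G. -/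
namespace TwoSpannerVC

variable {α : Type} [Fintype α] [DecidableEq α]

/-- The edges of the weighted graph `G_S` built from a simple graph `G` with vertex IDs
given by `id`.  The vertices of `G_S` are the pairs `(v, t)` for `t : Fin 3`, representing
`v₁, v₂, v₃`. -/
def GS (G : SimpleGraph α) (id : α → ℕ) : Set (Sym2 (α × Fin 3)) :=
  {e | (∃ v : α, e = s((v, 0), (v, 1)) ∨ e = s((v, 0), (v, 2)) ∨ e = s((v, 1), (v, 2))) ∨
       (∃ v u : α, G.Adj v u ∧ id v < id u ∧
         (e = s((v, 0), (u, 0)) ∨ e = s((v, 1), (u, 1)) ∨ e = s((v, 0), (u, 1))))}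

open scoped Classical in
/-- The weight of an edge of `G_S`: the triangle edges `{v₁,v₂}` have weight 1, the edges
`{v₁,u₂}` corresponding to edges of `G` have weight 2, and all other edges weight 0. -/
noncomputable def weight (G : SimpleGraph α) (id : α → ℕ) (e : Sym2 (α × Fin 3)) : ℕ :=
  if ∃ v : α, e = s((v, 0), (v, 1)) then 1
  else if ∃ v u : α, G.Adj v u ∧ id v < id u ∧ e = s((v, 0), (u, 1)) then 2
  else 0

/-- The cost of a set of edges of `G_S`: the sum of the weights of its edges. -/
noncomputable def cost (G : SimpleGraph α) (id : α → ℕ) (H : Set (Sym2 (α × Fin 3))) : ℕ :=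
  ∑ᶠ e ∈ H, weight G id e

/-- The edge `{x,y}` is covered by `H`: it belongs to `H` or there is a path of length 2
between `x` and `y` in `H`. -/
def Covered (H : Set (Sym2 (α × Fin 3))) (x y : α × Fin 3) : Prop :=
  s(x, y) ∈ H ∨ ∃ z, s(x, z) ∈ H ∧ s(z, y) ∈ H

/-- `H` is a 2-spanner of `G_S`: a subset of its edges covering every edge of `G_S`. -/
def IsTwoSpanner (G : SimpleGraph α) (id : α → ℕ) (H : Set (Sym2 (α × Fin 3))) : Prop :=
  H ⊆ GS G id ∧ ∀ x y : α × Fin 3, s(x, y) ∈ GS G id → Covered H x y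

/-- `C` is a vertex cover of `G`. -/
def IsVertexCover (G : SimpleGraph α) (C : Set α) : Prop :=
  ∀ v u : α, G.Adj v u → v ∈ C ∨ u ∈ C

/-! ### Auxiliary lemmas -/

set_option linter.unusedSectionVars false

lemma covered_symm {H : Set (Sym2 (α × Fin 3))} {x y : α × Fin 3}
    (h : Covered H x y) : Covered H y x := by
  rcases h with h | ⟨z, h1, h2⟩
  · exact Or.inl (by rwa [Sym2.eq_swap])
  · exact Or.inr ⟨z, by rwa [Sym2.eq_swap], by rwa [Sym2.eq_swap]⟩

lemma covered_of_eq {H : Set (Sym2 (α × Fin 3))} {x y a b : α × Fin 3}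
    (he : s(x, y) = s(a, b)) (h : Covered H a b) : Covered H x y := by
  rw [Sym2.eq_iff] at he
  rcases he with ⟨rfl, rfl⟩ | ⟨rfl, rfl⟩
  · exact h
  · exact covered_symm h

lemma weight_tri (G : SimpleGraph α) (id : α → ℕ) (v : α) :
    weight G id s((v, 0), (v, 1)) = 1 := if_pos ⟨v, rfl⟩

lemma weight_cross (G : SimpleGraph α) (id : α → ℕ) {v u : α}
    (ha : G.Adj v u) (hlt : id v < id u) :
    weight G id s((v, 0), (u, 1)) = 2 := by
  rw [weight, if_neg, if_pos ⟨v, u, ha, hlt, rfl⟩]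
  rintro ⟨w, hw⟩
  simp [Sym2.eq_iff, Prod.mk.injEq] at hw
  exact ha.ne (hw.1.trans hw.2.symm)

lemma weight_02 (G : SimpleGraph α) (id : α → ℕ) (v : α) :
    weight G id s((v, 0), (v, 2)) = 0 := by
  rw [weight, if_neg, if_neg]
  · rintro ⟨w, x, -, -, hw⟩; simp [Sym2.eq_iff, Prod.mk.injEq] at hw
  · rintro ⟨w, hw⟩; simp [Sym2.eq_iff, Prod.mk.injEq] at hw

lemma weight_12 (G : SimpleGraph α) (id : α → ℕ) (v : α) :
    weight G id s((v, 1), (v, 2)) = 0 := by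
  rw [weight, if_neg, if_neg]
  · rintro ⟨w, x, -, -, hw⟩; simp [Sym2.eq_iff, Prod.mk.injEq] at hw
  · rintro ⟨w, hw⟩; simp [Sym2.eq_iff, Prod.mk.injEq] at hw

lemma weight_00 (G : SimpleGraph α) (id : α → ℕ) (v u : α) :
    weight G id s((v, 0), (u, 0)) = 0 := by
  rw [weight, if_neg, if_neg]
  · rintro ⟨w, x, -, -, hw⟩; simp [Sym2.eq_iff, Prod.mk.injEq] at hw
  · rintro ⟨w, hw⟩; simp [Sym2.eq_iff, Prod.mk.injEq] at hw

lemma weight_11 (G : SimpleGraph α) (id : α → ℕ) (v u : α) :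
    weight G id s((v, 1), (u, 1)) = 0 := by
  rw [weight, if_neg, if_neg]
  · rintro ⟨w, x, -, -, hw⟩; simp [Sym2.eq_iff, Prod.mk.injEq] at hw
  · rintro ⟨w, hw⟩; simp [Sym2.eq_iff, Prod.mk.injEq] at hw

lemma cost_eq (G : SimpleGraph α) (id : α → ℕ) (H : Set (Sym2 (α × Fin 3))) :
    cost G id H = ∑ e ∈ (Set.toFinite H).toFinset, weight G id e := by
  rw [cost, ← finsum_mem_coe_finset, Set.Finite.coe_toFinset]

lemma mem0 {G : SimpleGraph α} {id : α → ℕ} {v : α} {z : α × Fin 3}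
    (h : s(((v : α), (0 : Fin 3)), z) ∈ GS G id) :
    z = (v, 1) ∨ z = (v, 2) ∨ (∃ w, G.Adj v w ∧ z = (w, 0)) ∨
      (∃ w, G.Adj v w ∧ id v < id w ∧ z = (w, 1)) := by
  obtain ⟨z1, z2⟩ := z
  obtain ⟨w, h | h | h⟩ | ⟨w, x, ha, hlt, h | h | h⟩ := h <;>
    simp [Sym2.eq_iff, Prod.mk.injEq] at h
  · obtain ⟨rfl, rfl, rfl⟩ := h; exact Or.inl rfl
  · obtain ⟨rfl, rfl, rfl⟩ := h; exact Or.inr (Or.inl rfl)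
  · rcases h with ⟨rfl, rfl, rfl⟩ | ⟨rfl, rfl, rfl⟩
    · exact Or.inr (Or.inr (Or.inl ⟨z1, ha, rfl⟩))
    · exact Or.inr (Or.inr (Or.inl ⟨z1, ha.symm, rfl⟩))
  · obtain ⟨rfl, rfl, rfl⟩ := h
    exact Or.inr (Or.inr (Or.inr ⟨z1, ha, hlt, rfl⟩))

lemma mem1 {G : SimpleGraph α} {id : α → ℕ} {u : α} {z : α × Fin 3}
    (h : s(z, ((u : α), (1 : Fin 3))) ∈ GS G id) :
    z = (u, 0) ∨ z = (u, 2) ∨ (∃ w, G.Adj u w ∧ z = (w, 1)) ∨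
      (∃ w, G.Adj w u ∧ id w < id u ∧ z = (w, 0)) := by
  obtain ⟨z1, z2⟩ := z
  obtain ⟨w, h | h | h⟩ | ⟨w, x, ha, hlt, h | h | h⟩ := h <;>
    simp [Sym2.eq_iff, Prod.mk.injEq] at h
  · obtain ⟨⟨rfl, rfl⟩, rfl⟩ := h; exact Or.inl rfl
  · obtain ⟨⟨rfl, rfl⟩, rfl⟩ := h; exact Or.inr (Or.inl rfl)
  · rcases h with ⟨⟨rfl, rfl⟩, rfl⟩ | ⟨⟨rfl, rfl⟩, rfl⟩
    · exact Or.inr (Or.inr (Or.inl ⟨z1, ha.symm, rfl⟩))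
    · exact Or.inr (Or.inr (Or.inl ⟨z1, ha, rfl⟩))
  · obtain ⟨⟨rfl, rfl⟩, rfl⟩ := h
    exact Or.inr (Or.inr (Or.inr ⟨z1, ha, hlt, rfl⟩))

/-! ### Upper bound: a vertex cover yields a cheap 2-spanner -/

def spannerOf (G : SimpleGraph α) (id : α → ℕ) (C : Set α) : Set (Sym2 (α × Fin 3)) :=
  {e | (∃ v : α, e = s((v, 0), (v, 2)) ∨ e = s((v, 1), (v, 2))) ∨
       (∃ v u : α, G.Adj v u ∧ id v < id u ∧ (e = s((v, 0), (u, 0)) ∨ e = s((v, 1), (u, 1)))) ∨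
       (∃ c ∈ C, e = s((c, 0), (c, 1)))}

lemma spannerOf_isTwoSpanner (G : SimpleGraph α) (id : α → ℕ) {C : Set α}
    (hC : IsVertexCover G C) : IsTwoSpanner G id (spannerOf G id C) := by
  constructor
  · rintro e (⟨v, h | h⟩ | ⟨v, u, ha, hlt, h | h⟩ | ⟨c, -, h⟩)
    · exact Or.inl ⟨v, Or.inr (Or.inl h)⟩
    · exact Or.inl ⟨v, Or.inr (Or.inr h)⟩
    · exact Or.inr ⟨v, u, ha, hlt, Or.inl h⟩
    · exact Or.inr ⟨v, u, ha, hlt, Or.inr (Or.inl h)⟩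
    · exact Or.inl ⟨c, Or.inl h⟩
  · rintro x y (⟨v, h | h | h⟩ | ⟨v, u, ha, hlt, h | h | h⟩)
    · refine covered_of_eq h (Or.inr ⟨(v, 2), ?_, ?_⟩)
      · exact Or.inl ⟨v, Or.inl rfl⟩
      · exact Or.inl ⟨v, Or.inr Sym2.eq_swap⟩
    · exact covered_of_eq h (Or.inl (Or.inl ⟨v, Or.inl rfl⟩))
    · exact covered_of_eq h (Or.inl (Or.inl ⟨v, Or.inr rfl⟩))
    · exact covered_of_eq h (Or.inl (Or.inr (Or.inl ⟨v, u, ha, hlt, Or.inl rfl⟩)))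
    · exact covered_of_eq h (Or.inl (Or.inr (Or.inl ⟨v, u, ha, hlt, Or.inr rfl⟩)))
    · rcases hC v u ha with hv | hu
      · refine covered_of_eq h (Or.inr ⟨(v, 1), ?_, ?_⟩)
        · exact Or.inr (Or.inr ⟨v, hv, rfl⟩)
        · exact Or.inr (Or.inl ⟨v, u, ha, hlt, Or.inr rfl⟩)
      · refine covered_of_eq h (Or.inr ⟨(u, 0), ?_, ?_⟩)
        · exact Or.inr (Or.inl ⟨v, u, ha, hlt, Or.inl rfl⟩)
        · exact Or.inr (Or.inr ⟨u, hu, rfl⟩)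

lemma spannerOf_cost_le (G : SimpleGraph α) (id : α → ℕ) (C : Set α) :
    cost G id (spannerOf G id C) ≤ C.ncard := by
  classical
  set T : Finset (Sym2 (α × Fin 3)) :=
    (Set.toFinite C).toFinset.image (fun c => s((c, 0), (c, 1))) with hT
  rw [cost_eq]
  have hle : ∀ e ∈ (Set.toFinite (spannerOf G id C)).toFinset,
      weight G id e ≤ if e ∈ T then 1 else 0 := by
    intro e he
    rw [Set.Finite.mem_toFinset] at he
    by_cases heT : e ∈ T
    · rw [if_pos heT]
      simp only [hT, Finset.mem_image, Set.Finite.mem_toFinset] at heT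
      obtain ⟨c, -, rfl⟩ := heT
      rw [weight_tri]
    · rw [if_neg heT]
      rcases he with ⟨v, rfl | rfl⟩ | ⟨v, u, ha, hlt, rfl | rfl⟩ | ⟨c, hc, rfl⟩
      · rw [weight_02]
      · rw [weight_12]
      · rw [weight_00]
      · rw [weight_11]
      · exact absurd (Finset.mem_image.2 ⟨c, (Set.Finite.mem_toFinset _).2 hc, rfl⟩) heT
  calc ∑ e ∈ (Set.toFinite (spannerOf G id C)).toFinset, weight G id e
      ≤ ∑ e ∈ (Set.toFinite (spannerOf G id C)).toFinset, if e ∈ T then 1 else 0 :=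
        Finset.sum_le_sum hle
    _ = ∑ e ∈ (Set.toFinite (spannerOf G id C)).toFinset.filter (· ∈ T), 1 :=
        (Finset.sum_filter _ _).symm
    _ = ((Set.toFinite (spannerOf G id C)).toFinset.filter (· ∈ T)).card := by
        rw [Finset.sum_const, smul_eq_mul, mul_one]
    _ ≤ T.card := Finset.card_le_card (fun e he => (Finset.mem_filter.1 he).2)
    _ ≤ (Set.toFinite C).toFinset.card := Finset.card_image_le
    _ = C.ncard := (Set.ncard_eq_toFinset_card C (Set.toFinite C)).symm

/-! ### Lower bound -/

lemma vc_le_cost (G : SimpleGraph α) (id : α → ℕ) (hid : Function.Injective id)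
    {H : Set (Sym2 (α × Fin 3))} (hH : IsTwoSpanner G id H) :
    ∃ C : Set α, IsVertexCover G C ∧ C.ncard ≤ cost G id H := by
  classical
  obtain ⟨hsub, hcov⟩ := hH
  set A : Set α := {v | s((v, 0), (v, 1)) ∈ H} with hA
  set E2 : Set (α × α) := {p | G.Adj p.1 p.2 ∧ id p.1 < id p.2 ∧ s((p.1, 0), (p.2, 1)) ∈ H}
    with hE2
  refine ⟨A ∪ (Prod.fst '' E2) ∪ (Prod.snd '' E2), ?_, ?_⟩
  · -- vertex cover
    have key : ∀ v u : α, G.Adj v u → id v < id u →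
        v ∈ A ∪ (Prod.fst '' E2) ∪ (Prod.snd '' E2) ∨
        u ∈ A ∪ (Prod.fst '' E2) ∪ (Prod.snd '' E2) := by
      intro v u ha hlt
      have hgs : s(((v : α), (0 : Fin 3)), ((u : α), (1 : Fin 3))) ∈ GS G id :=
        Or.inr ⟨v, u, ha, hlt, Or.inr (Or.inr rfl)⟩
      rcases hcov _ _ hgs with hdir | ⟨z, h1, h2⟩
      · exact Or.inl (Or.inl (Or.inr ⟨(v, u), ⟨ha, hlt, hdir⟩, rfl⟩))
      · rcases mem0 (hsub h1) with rfl | rfl | ⟨w, haw, rfl⟩ | ⟨w, haw, hltw, rfl⟩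
        · exact Or.inl (Or.inl (Or.inl h1))
        · rcases mem1 (hsub h2) with hz | hz | ⟨w, -, hz⟩ | ⟨w, -, -, hz⟩ <;>
            simp [Prod.ext_iff] at hz
          exact absurd hz ha.ne
        · rcases mem1 (hsub h2) with hz | hz | ⟨w', -, hz⟩ | ⟨w', haw', hltw', hz⟩ <;>
            simp [Prod.ext_iff] at hz
          · subst hz
            exact Or.inr (Or.inl (Or.inl h2))
          · obtain rfl := hz
            exact Or.inr (Or.inr ⟨(w, u), ⟨haw', hltw', h2⟩, rfl⟩)
        · exact Or.inl (Or.inl (Or.inr ⟨(v, w), ⟨haw, hltw, h1⟩, rfl⟩))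
    intro v u ha
    rcases lt_trichotomy (id v) (id u) with hlt | heq | hgt
    · exact key v u ha hlt
    · exact absurd (hid heq) ha.ne
    · exact (key u v ha.symm hgt).symm
  · -- cardinality bound
    set F := (Set.toFinite H).toFinset with hF
    set FA : Finset (Sym2 (α × Fin 3)) :=
      (Set.toFinite A).toFinset.image (fun v => s((v, 0), (v, 1))) with hFA
    set FE : Finset (Sym2 (α × Fin 3)) :=
      (Set.toFinite E2).toFinset.image (fun p => s((p.1, 0), (p.2, 1))) with hFE
    have hsubF : FA ∪ FE ⊆ F := by
      intro e he
      rw [hF, Set.Finite.mem_toFinset]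
      rcases Finset.mem_union.1 he with he | he <;>
        · simp only [hFA, hFE, Finset.mem_image, Set.Finite.mem_toFinset] at he
          obtain ⟨x, hx, rfl⟩ := he
          first
          | exact hx
          | exact hx.2.2
    have hdisj : Disjoint FA FE := by
      rw [Finset.disjoint_left]
      intro e heA heE
      simp only [hFA, hFE, Finset.mem_image, Set.Finite.mem_toFinset] at heA heE
      obtain ⟨v, -, rfl⟩ := heA
      obtain ⟨p, hp, hpe⟩ := heE
      simp [Sym2.eq_iff, Prod.mk.injEq] at hpe
      exact hp.1.ne (hpe.1.trans hpe.2.symm)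
    have hAcard : ∑ e ∈ FA, weight G id e = A.ncard := by
      rw [Finset.sum_congr rfl (fun e he => ?_), Finset.sum_const, smul_eq_mul, mul_one,
        hFA, Finset.card_image_of_injective, Set.ncard_eq_toFinset_card]
      · intro a b hab
        simp [Sym2.eq_iff, Prod.mk.injEq] at hab
        exact hab
      · simp only [hFA, Finset.mem_image] at he
        obtain ⟨v, -, rfl⟩ := he
        exact weight_tri G id v
    have hEcard : ∑ e ∈ FE, weight G id e = 2 * E2.ncard := by
      rw [Finset.sum_congr rfl (fun e he => ?_), Finset.sum_const, smul_eq_mul,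
        hFE, Finset.card_image_of_injective, Set.ncard_eq_toFinset_card, mul_comm]
      · intro a b hab
        simp [Sym2.eq_iff, Prod.mk.injEq] at hab
        exact Prod.ext hab.1 hab.2
      · simp only [hFE, Finset.mem_image, Set.Finite.mem_toFinset] at he
        obtain ⟨p, hp, rfl⟩ := he
        exact weight_cross G id hp.1 hp.2.1
    have hcost : A.ncard + 2 * E2.ncard ≤ cost G id H := by
      rw [cost_eq, ← hF, ← hAcard, ← hEcard, ← Finset.sum_union hdisj]
      exact Finset.sum_le_sum_of_subset hsubF
    have hE2fin : E2.Finite := Set.toFinite _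
    calc (A ∪ (Prod.fst '' E2) ∪ (Prod.snd '' E2)).ncard
        ≤ (A ∪ (Prod.fst '' E2)).ncard + (Prod.snd '' E2).ncard := Set.ncard_union_le _ _
      _ ≤ A.ncard + (Prod.fst '' E2).ncard + (Prod.snd '' E2).ncard := by
          have := Set.ncard_union_le A (Prod.fst '' E2)
          omega
      _ ≤ A.ncard + E2.ncard + E2.ncard := by
          have h1 := Set.ncard_image_le (f := Prod.fst) hE2fin
          have h2 := Set.ncard_image_le (f := Prod.snd) hE2fin
          omega
      _ ≤ cost G id H := by omega

/-- The minimum cost of a 2-spanner of `G_S` is exactly the minimum size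
of a vertex cover of `G`. -/
theorem statement8 (G : SimpleGraph α) (id : α → ℕ) (hid : Function.Injective id) :
    sInf {c : ℕ | ∃ H : Set (Sym2 (α × Fin 3)), IsTwoSpanner G id H ∧ cost G id H = c} =
      sInf {c : ℕ | ∃ C : Set α, IsVertexCover G C ∧ C.ncard = c} := by
  classical
  have hT : {c : ℕ | ∃ C : Set α, IsVertexCover G C ∧ C.ncard = c}.Nonempty :=
    ⟨(Set.univ : Set α).ncard, Set.univ, fun v u _ => Or.inl (Set.mem_univ v), rfl⟩
  have hS : {c : ℕ | ∃ H : Set (Sym2 (α × Fin 3)),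
      IsTwoSpanner G id H ∧ cost G id H = c}.Nonempty :=
    ⟨cost G id (GS G id), GS G id, ⟨subset_rfl, fun x y h => Or.inl h⟩, rfl⟩
  apply le_antisymm
  · obtain ⟨C, hC, hCc⟩ := Nat.sInf_mem hT
    calc sInf {c : ℕ | ∃ H : Set (Sym2 (α × Fin 3)),
          IsTwoSpanner G id H ∧ cost G id H = c}
        ≤ cost G id (spannerOf G id C) :=
          Nat.sInf_le ⟨spannerOf G id C, spannerOf_isTwoSpanner G id hC, rfl⟩
      _ ≤ C.ncard := spannerOf_cost_le G id C
      _ = _ := hCc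
  · obtain ⟨H, hH, hHc⟩ := Nat.sInf_mem hS
    obtain ⟨C, hC, hCle⟩ := vc_le_cost G id hid hH
    calc sInf {c : ℕ | ∃ C : Set α, IsVertexCover G C ∧ C.ncard = c}
        ≤ C.ncard := Nat.sInf_le ⟨C, hC, rfl⟩
      _ ≤ cost G id H := hCle
      _ = _ := hHc

end TwoSpannerVC
end

section
/- Let G be a finite directed graph, v a vertex, and H a set of directed edges of G. Let S_v be an undirected v-star of maximum undirected density (so ρ_U(S_v) = ρ_U), and let S_v^D be its directed version. Then the directed density of S_v^D with respect to H satisfies ρ_D(S_v^D) ≥ ρ_U / 2. -/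
namespace DirDensity

variable {α : Type} [Fintype α] [DecidableEq α]

/-- `S` is a directed `v`-star in the digraph `G`: a nonempty set of edges of `G`
incident to `v` (ingoing or outgoing). -/
def IsDirStar (G : α → α → Prop) (v : α) (S : Set (α × α)) : Prop :=
  S.Nonempty ∧ ∀ e ∈ S, G e.1 e.2 ∧ (e.1 = v ∨ e.2 = v)

/-- The directed density of a directed `v`-star `S` with respect to the edge set `H`:
the number of edges `(u,w)` of `H` 2-spanned by `S` (i.e. `(u,v) ∈ S` and `(v,w) ∈ S`),
divided by `|S|`. -/
noncomputable def rhoD (v : α) (H S : Set (α × α)) : ℝ :=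
  ({e ∈ H | (e.1, v) ∈ S ∧ (v, e.2) ∈ S}.ncard : ℝ) / (S.ncard : ℝ)

/-- The surviving edges of `H` in the undirected auxiliary instance, as unordered pairs:
directed edges `(u,w)` of `H` with `(u,v)` or `(v,w)` absent from `G` are discarded, and
the remaining ones are replaced by undirected edges. -/
def survH (G : α → α → Prop) (v : α) (H : Set (α × α)) : Set (Sym2 α) :=
  {e | ∃ u w, (u, w) ∈ H ∧ G u v ∧ G v w ∧ e = s(u, w)}

/-- An undirected `v`-star, described by its set `T` of endpoints other than `v`:
a nonempty set of undirected edges `{v,u}` coming from directed edges of `G` at `v`. -/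
def IsUndirStar (G : α → α → Prop) (v : α) (T : Set α) : Prop :=
  T.Nonempty ∧ ∀ u ∈ T, u ≠ v ∧ (G v u ∨ G u v)

/-- The undirected density of the undirected `v`-star with endpoint set `T`, with respect
to the surviving edges of `H`: the number of surviving undirected edges 2-spanned by the
star divided by its size `|T|`. -/
noncomputable def rhoU (G : α → α → Prop) (v : α) (H : Set (α × α)) (T : Set α) : ℝ :=
  ({e ∈ survH G v H | ∃ u w, u ∈ T ∧ w ∈ T ∧ e = s(u, w)}.ncard : ℝ) / (T.ncard : ℝ)

/-- The directed version of the undirected `v`-star with endpoint set `T`: each undirected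
edge `{v,u}` is replaced by those of the directed edges `(v,u)`, `(u,v)` existing in `G`. -/
def dirVersion (G : α → α → Prop) (v : α) (T : Set α) : Set (α × α) :=
  {e | ∃ u ∈ T, (e = (v, u) ∧ G v u) ∨ (e = (u, v) ∧ G u v)}

/-- If `S_v` is an undirected `v`-star of maximum undirected density
`ρ_U`, then its directed version has directed density at least `ρ_U / 2` with respect
to `H`. -/
theorem statement12 (G : α → α → Prop) (v : α) (H : Set (α × α))
    (hH : ∀ e ∈ H, G e.1 e.2)
    (T : Set α) (hT : IsUndirStar G v T)
    (hmax : ∀ T' : Set α, IsUndirStar G v T' → rhoU G v H T' ≤ rhoU G v H T) :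
    rhoU G v H T / 2 ≤ rhoD v H (dirVersion G v T) := by
  classical
  obtain ⟨⟨u0, hu0⟩, hTprop⟩ := hT
  set S := dirVersion G v T with hSdef
  have hSne : S.Nonempty := by
    obtain ⟨hu0v, hG⟩ := hTprop u0 hu0
    rcases hG with h | h
    · exact ⟨(v, u0), u0, hu0, Or.inl ⟨rfl, h⟩⟩
    · exact ⟨(u0, v), u0, hu0, Or.inr ⟨rfl, h⟩⟩
  have hSpos : 0 < (S.ncard : ℝ) := by
    have := (Set.ncard_pos (Set.toFinite S)).mpr hSne
    exact_mod_cast this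
  have hScard : (S.ncard : ℝ) ≤ (T.ncard : ℝ) * 2 := by
    have hsub : S ⊆ (fun u => (v, u)) '' T ∪ (fun u => (u, v)) '' T := by
      rintro e ⟨u, hu, ⟨rfl, _⟩ | ⟨rfl, _⟩⟩
      · exact Or.inl ⟨u, hu, rfl⟩
      · exact Or.inr ⟨u, hu, rfl⟩
    have h1 : S.ncard ≤ ((fun u => (v, u)) '' T ∪ (fun u => (u, v)) '' T).ncard :=
      Set.ncard_le_ncard hsub (Set.toFinite _)
    have h2 : ((fun u => (v, u)) '' T ∪ (fun u => (u, v)) '' T).ncard ≤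
        ((fun u => (v, u)) '' T).ncard + ((fun u => (u, v)) '' T).ncard :=
      Set.ncard_union_le _ _
    have h3 : ((fun u => (v, u)) '' T).ncard ≤ T.ncard :=
      Set.ncard_image_le (Set.toFinite _)
    have h4 : ((fun u => (u, v)) '' T).ncard ≤ T.ncard :=
      Set.ncard_image_le (Set.toFinite _)
    have : S.ncard ≤ T.ncard * 2 := by omega
    exact_mod_cast this
  have hAB : ({e ∈ survH G v H | ∃ u w, u ∈ T ∧ w ∈ T ∧ e = s(u, w)}.ncard : ℝ)
      ≤ ({e ∈ H | (e.1, v) ∈ S ∧ (v, e.2) ∈ S}.ncard : ℝ) := by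
    have hsub : {e ∈ survH G v H | ∃ u w, u ∈ T ∧ w ∈ T ∧ e = s(u, w)}
        ⊆ (fun p : α × α => s(p.1, p.2)) '' {e ∈ H | (e.1, v) ∈ S ∧ (v, e.2) ∈ S} := by
      rintro e ⟨⟨u', w', hH', hGu'v, hGvw', rfl⟩, u, w, hu, hw, hew⟩
      have hpair : (u' = u ∧ w' = w) ∨ (u' = w ∧ w' = u) := by
        have := Sym2.eq_iff.mp hew
        tauto
      have hu'T : u' ∈ T := by rcases hpair with ⟨h1, h2⟩ | ⟨h1, h2⟩ <;> subst h1 <;> assumption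
      have hw'T : w' ∈ T := by rcases hpair with ⟨h1, h2⟩ | ⟨h1, h2⟩ <;> subst h2 <;> assumption
      refine ⟨(u', w'), ⟨hH', ?_, ?_⟩, rfl⟩
      · exact ⟨u', hu'T, Or.inr ⟨rfl, hGu'v⟩⟩
      · exact ⟨w', hw'T, Or.inl ⟨rfl, hGvw'⟩⟩
    have h1 := Set.ncard_le_ncard hsub (Set.toFinite _)
    have h2 := Set.ncard_image_le (s := {e ∈ H | (e.1, v) ∈ S ∧ (v, e.2) ∈ S})
      (f := fun p : α × α => s(p.1, p.2)) (Set.toFinite _)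
    exact_mod_cast le_trans h1 h2
  have hBnn : (0 : ℝ) ≤ ({e ∈ H | (e.1, v) ∈ S ∧ (v, e.2) ∈ S}.ncard : ℝ) := by positivity
  rw [rhoU, rhoD, div_div]
  exact div_le_div₀ hBnn hAB hSpos hScard

end DirDensity
end

section
/- Let U be a finite set, and consider a uniformly random linear order on U (each of the |U|! orderings being equally likely). Let A, A' ⊆ U with S ∈ A ∩ A' and |A'| ≤ |A|. Then the probability that S is the minimum element of A', conditioned on the event that S is the minimum element of A, equals |A| / |A ∪ A'|, which is at least 1/2. -/
/-!
Swapping two elements of `B` permutes the orders, so every element of `B` is the minimum of `B`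
for the same number `|U|! / |B|` of orders. Since `S ∈ A ∩ A'`, the event that `S` is the minimum
of both `A` and `A'` is the event that `S` is the minimum of `A ∪ A'`, so the conditional
probability is `(|U|! / |A ∪ A'|) / (|U|! / |A|)`; and `|A ∪ A'| ≤ |A| + |A'| ≤ 2 |A|`.
-/

namespace RandomOrder

variable {U : Type} [Fintype U] [DecidableEq U]

def IsMinOf (σ : U ≃ Fin (Fintype.card U)) (B : Finset U) (S : U) : Prop :=
  S ∈ B ∧ ∀ x ∈ B, x ≠ S → σ S < σ x

section

variable {σ : U ≃ Fin (Fintype.card U)} {B : Finset U}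

theorem IsMinOf.unique {a b : U} (ha : IsMinOf σ B a) (hb : IsMinOf σ B b) : a = b := by
  by_contra hab
  exact lt_asymm (ha.2 b hb.1 (Ne.symm hab)) (hb.2 a ha.1 hab)

omit [DecidableEq U] in
theorem exists_isMinOf (hB : B.Nonempty) : ∃ b, IsMinOf σ B b := by
  obtain ⟨b, hb, hmin⟩ := B.exists_min_image σ hB
  exact ⟨b, hb, fun x hx hxb => (hmin x hx).lt_of_ne fun h => hxb (σ.injective h).symm⟩

theorem isMinOf_union_iff {A A' : Finset U} {S : U} (hA : S ∈ A) (hA' : S ∈ A') :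
    IsMinOf σ (A ∪ A') S ↔ IsMinOf σ A S ∧ IsMinOf σ A' S := by
  simp only [IsMinOf, Finset.mem_union, or_imp, forall_and]
  tauto

omit [DecidableEq U] in
theorem isMinOf_trans_iff {e : Equiv.Perm U} (he : ∀ x, e x ∈ B ↔ x ∈ B) {y : U} :
    IsMinOf (e.trans σ) B y ↔ IsMinOf σ B (e y) := by
  simp only [IsMinOf, Equiv.trans_apply, he]
  refine and_congr_right fun _ => ⟨fun h x hx hxy => ?_, fun h x hx hxy => ?_⟩
  · simpa using h (e.symm x) ((he _).mp (by simpa using hx)) (by rintro rfl; simp at hxy)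
  · exact h (e x) ((he x).mpr hx) (e.injective.ne hxy)

end

open Classical in
theorem card_filter_isMinOf_congr {B : Finset U} {x y : U} (hx : x ∈ B) (hy : y ∈ B) :
    (Finset.univ.filter (IsMinOf · B x)).card = (Finset.univ.filter (IsMinOf · B y)).card := by
  have hswap : ∀ z, Equiv.swap x y z ∈ B ↔ z ∈ B := fun z => by
    rcases eq_or_ne z x with rfl | hzx
    · simp [hx, hy]
    rcases eq_or_ne z y with rfl | hzy
    · simp [hx, hy]
    rw [Equiv.swap_apply_of_ne_of_ne hzx hzy]
  refine Finset.card_nbij' ((Equiv.swap x y).trans ·) ((Equiv.swap x y).trans ·) ?_ ?_ ?_ ?_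
  · intro σ hσ
    simpa [isMinOf_trans_iff hswap] using hσ
  · intro σ hσ
    simpa [isMinOf_trans_iff hswap] using hσ
  all_goals intro σ _; ext z; simp

open Classical in
theorem card_filter_isMinOf_mul_card {B : Finset U} {S : U} (hS : S ∈ B) :
    (Finset.univ.filter (IsMinOf · B S)).card * B.card = (Fintype.card U).factorial := by
  have hcover : Finset.univ = B.biUnion fun b => Finset.univ.filter (IsMinOf · B b) := by
    ext σ
    obtain ⟨b, hb⟩ := exists_isMinOf (σ := σ) ⟨S, hS⟩
    simpa using ⟨b, hb.1, hb⟩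
  have hdisj : (B : Set U).PairwiseDisjoint fun b => Finset.univ.filter (IsMinOf · B b) :=
    fun a _ b _ hab => Finset.disjoint_filter.mpr fun _ _ ha hb => hab (ha.unique hb)
  calc (Finset.univ.filter (IsMinOf · B S)).card * B.card
      = ∑ b ∈ B, (Finset.univ.filter (IsMinOf · B b)).card := by
        rw [Finset.sum_congr rfl fun b hb => card_filter_isMinOf_congr hb hS,
          Finset.sum_const, smul_eq_mul, mul_comm]
    _ = Fintype.card (U ≃ Fin (Fintype.card U)) := by
        rw [← Finset.card_biUnion hdisj, ← hcover, Finset.card_univ]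
    _ = (Fintype.card U).factorial := Fintype.card_equiv (Fintype.equivFin U)

theorem ncard_isMinOf {B : Finset U} {S : U} (hS : S ∈ B) :
    (({σ : U ≃ Fin (Fintype.card U) | IsMinOf σ B S} : Set _).ncard : ℝ) =
      (Fintype.card U).factorial / B.card := by
  classical
  have hB : (B.card : ℝ) ≠ 0 := Nat.cast_ne_zero.mpr (Finset.card_ne_zero_of_mem hS)
  rw [eq_div_iff hB, ← Finset.coe_filter_univ, Set.ncard_coe_finset]
  exact_mod_cast card_filter_isMinOf_mul_card hS

/-- For a uniformly random linear order on a finite set `U` (equivalently,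
a uniformly random bijection `U ≃ Fin |U|`), if `S ∈ A ∩ A'` and `|A'| ≤ |A|`, then the
probability that `S` is the minimum of `A'` conditioned on `S` being the minimum of `A`
equals `|A| / |A ∪ A'|`, which is at least `1/2`. -/
theorem statement16 (A A' : Finset U) (S : U) (hS : S ∈ A ∩ A') (hcard : A'.card ≤ A.card) :
    (({σ : U ≃ Fin (Fintype.card U) | IsMinOf σ A S ∧ IsMinOf σ A' S} : Set _).ncard : ℝ) /
        (({σ : U ≃ Fin (Fintype.card U) | IsMinOf σ A S} : Set _).ncard : ℝ) =
      (A.card : ℝ) / ((A ∪ A').card : ℝ) ∧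
    (1 : ℝ) / 2 ≤ (A.card : ℝ) / ((A ∪ A').card : ℝ) := by
  obtain ⟨hSA, hSA'⟩ := Finset.mem_inter.mp hS
  have hSU : S ∈ A ∪ A' := Finset.mem_union_left _ hSA
  have hA : (0 : ℝ) < A.card := by exact_mod_cast Finset.card_pos.mpr ⟨S, hSA⟩
  have hU : (0 : ℝ) < (A ∪ A').card := by exact_mod_cast Finset.card_pos.mpr ⟨S, hSU⟩
  have hunion : ((A ∪ A').card : ℝ) ≤ 2 * A.card := by
    exact_mod_cast (Finset.card_union_le A A').trans (by omega)
  simp only [← isMinOf_union_iff hSA hSA', ncard_isMinOf hSU, ncard_isMinOf hSA]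
  have hfact : (0 : ℝ) < (Fintype.card U).factorial := by exact_mod_cast Nat.factorial_pos _
  constructor
  · field_simp
  · rw [div_le_div_iff₀ two_pos hU]
    linarith

end RandomOrder
end

section
/- Let G be a finite simple graph, v a vertex of G, H a set of edges of G, and ρ > 0. Let S* be a v-star of maximum density with respect to H, and suppose ρ(S*, H) ≥ ρ/2. Let S be a v-star with ρ(S, H) ≥ ρ/4 such that S* is not contained in S. Then either the v-star S* \ S (which is nonempty and disjoint from S) satisfies ρ(S* \ S, H) ≥ ρ/4, or there exists an edge e ∈ S* \ S such that ρ(S ∪ {e}, H) ≥ ρ/4. -/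
/-! If neither alternative held, sort the edges of `H` spanned by `S*` into three kinds: those
spanned by `S* \ S`, those spanned by `S* ∩ S`, and those that become spanned when a single
edge `e ∈ S* \ S` is added to `S`. There are fewer than `ρ/4 · |S* \ S|` of the first kind, at
most `ρ(S*) · |S* ∩ S|` of the second by maximality of `S*`, and each `e` contributes fewer
than `ρ/4` of the third, since `ρ(S ∪ {e}) < ρ/4 ≤ ρ(S)`. Hence
`ρ(S*) · |S*| < ρ/2 · |S* \ S| + ρ(S*) · |S* ∩ S|`, that is `ρ(S*) < ρ/2`. -/

namespace StarStep

variable {α : Type} [Fintype α] [DecidableEq α]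

/-- `S` is a `v`-star in the simple graph `G`: a nonempty set of edges of `G` incident
to `v`. -/
def IsStar (G : SimpleGraph α) (v : α) (S : Set (Sym2 α)) : Prop :=
  S.Nonempty ∧ ∀ e ∈ S, e ∈ G.edgeSet ∧ v ∈ e

/-- The `v`-star `S` 2-spans the edge `e = {u,w}` if `{v,u} ∈ S` and `{v,w} ∈ S`. -/
def Spans (v : α) (S : Set (Sym2 α)) (e : Sym2 α) : Prop :=
  ∃ u w : α, e = s(u, w) ∧ s(v, u) ∈ S ∧ s(v, w) ∈ S

/-- The density of the `v`-star `S` with respect to the edge set `H`: the number of edges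
of `H` 2-spanned by `S` divided by `|S|`. -/
noncomputable def density (v : α) (H S : Set (Sym2 α)) : ℝ :=
  ({e ∈ H | Spans v S e}.ncard : ℝ) / (S.ncard : ℝ)

end StarStep

namespace StarStep

section

variable {α : Type} {v : α} {H S T : Set (Sym2 α)}

def spannedEdges (v : α) (H S : Set (Sym2 α)) : Set (Sym2 α) :=
  {e ∈ H | Spans v S e}

theorem spans_mk_iff {u w : α} : Spans v S s(u, w) ↔ s(v, u) ∈ S ∧ s(v, w) ∈ S := by
  constructor
  · rintro ⟨u', w', h, hu, hw⟩
    rcases Sym2.eq_iff.mp h with ⟨rfl, rfl⟩ | ⟨rfl, rfl⟩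
    exacts [⟨hu, hw⟩, ⟨hw, hu⟩]
  · rintro ⟨hu, hw⟩
    exact ⟨u, w, rfl, hu, hw⟩

theorem Spans.mono (hST : S ⊆ T) {e : Sym2 α} : Spans v S e → Spans v T e := by
  rintro ⟨u, w, rfl, hu, hw⟩
  exact ⟨u, w, rfl, hST hu, hST hw⟩

theorem spannedEdges_mono (hST : S ⊆ T) : spannedEdges v H S ⊆ spannedEdges v H T :=
  fun _ ⟨he, hs⟩ => ⟨he, hs.mono hST⟩

theorem spannedEdges_empty : spannedEdges v H ∅ = ∅ :=
  Set.eq_empty_of_forall_notMem fun _ ⟨_, _, _, _, hu, _⟩ => hu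

theorem Spans.sdiff_or_inter_or_newly {e : Sym2 α} (h : Spans v T e) :
    Spans v (T \ S) e ∨ Spans v (T ∩ S) e ∨
      ∃ f ∈ T \ S, Spans v (S ∪ {f}) e ∧ ¬ Spans v S e := by
  obtain ⟨u, w, rfl, hu, hw⟩ := h
  by_cases hus : s(v, u) ∈ S <;> by_cases hws : s(v, w) ∈ S
  · exact Or.inr (Or.inl (spans_mk_iff.mpr ⟨⟨hu, hus⟩, hw, hws⟩))
  · exact Or.inr (Or.inr ⟨_, ⟨hw, hws⟩, spans_mk_iff.mpr ⟨.inl hus, .inr rfl⟩,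
      fun h => hws (spans_mk_iff.mp h).2⟩)
  · exact Or.inr (Or.inr ⟨_, ⟨hu, hus⟩, spans_mk_iff.mpr ⟨.inr rfl, .inl hws⟩,
      fun h => hus (spans_mk_iff.mp h).1⟩)
  · exact Or.inl (spans_mk_iff.mpr ⟨⟨hu, hus⟩, hw, hws⟩)

theorem mul_ncard_le_of_le_density {c : ℝ} (h : c ≤ density v H S) :
    c * S.ncard ≤ (spannedEdges v H S).ncard := by
  rcases Nat.eq_zero_or_pos S.ncard with hS | hS
  · simp [hS]
  · exact (le_div_iff₀ (by exact_mod_cast hS)).mp h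

variable [Finite α]

theorem ncard_spannedEdges_lt_of_density_lt {c : ℝ} (hS : S.Nonempty)
    (h : density v H S < c) : ((spannedEdges v H S).ncard : ℝ) < c * S.ncard :=
  (div_lt_iff₀ (by exact_mod_cast hS.ncard_pos)).mp h

theorem ncard_spannedEdges_le_of_forall_density_le {G : SimpleGraph α} {d : ℝ}
    (hmax : ∀ S', IsStar G v S' → density v H S' ≤ d) (hT : ∀ e ∈ T, e ∈ G.edgeSet ∧ v ∈ e) :
    ((spannedEdges v H T).ncard : ℝ) ≤ d * T.ncard := by
  rcases T.eq_empty_or_nonempty with rfl | hne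
  · simp [spannedEdges_empty]
  · exact (div_le_iff₀ (by exact_mod_cast hne.ncard_pos)).mp (hmax T ⟨hne, hT⟩)

theorem ncard_spannedEdges_le (S T : Set (Sym2 α)) :
    (spannedEdges v H T).ncard ≤
      (spannedEdges v H (T \ S)).ncard + (spannedEdges v H (T ∩ S)).ncard +
        ∑ f ∈ (T \ S).toFinite.toFinset,
          (spannedEdges v H (S ∪ {f}) \ spannedEdges v H S).ncard := by
  set D := (T \ S).toFinite.toFinset
  have hcover : spannedEdges v H T ⊆ spannedEdges v H (T \ S) ∪ spannedEdges v H (T ∩ S) ∪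
      ⋃ f ∈ D, spannedEdges v H (S ∪ {f}) \ spannedEdges v H S := by
    rintro e ⟨he, hspan⟩
    rcases hspan.sdiff_or_inter_or_newly (S := S) with h | h | ⟨f, hf, hSf, hnS⟩
    · exact .inl (.inl ⟨he, h⟩)
    · exact .inl (.inr ⟨he, h⟩)
    · exact .inr (Set.mem_biUnion (by simpa [D] using hf) ⟨⟨he, hSf⟩, fun h => hnS h.2⟩)
  calc (spannedEdges v H T).ncard
      ≤ (spannedEdges v H (T \ S) ∪ spannedEdges v H (T ∩ S) ∪
          ⋃ f ∈ D, spannedEdges v H (S ∪ {f}) \ spannedEdges v H S).ncard :=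
        Set.ncard_le_ncard hcover
    _ ≤ _ := by
        grw [Set.ncard_union_le, Set.ncard_union_le, Finset.set_ncard_biUnion_le]

theorem ncard_spannedEdges_union_singleton_sdiff_lt {c : ℝ} {f : Sym2 α} (hf : f ∉ S) (hS : c ≤ density v H S)
    (hSf : density v H (S ∪ {f}) < c) :
    ((spannedEdges v H (S ∪ {f}) \ spannedEdges v H S).ncard : ℝ) < c := by
  have hsplit := Set.ncard_sdiff_add_ncard_of_subset
    (spannedEdges_mono (H := H) (v := v) (Set.subset_union_left (s := S) (t := {f})))
  have hcard : (S ∪ {f}).ncard = S.ncard + 1 := by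
    rw [Set.union_singleton, Set.ncard_insert_of_notMem hf]
  have hlt := ncard_spannedEdges_lt_of_density_lt ⟨f, .inr rfl⟩ hSf
  have hle := mul_ncard_le_of_le_density hS
  rw [hcard, ← hsplit] at hlt
  push_cast at hlt
  linarith

theorem ncard_spannedEdges_lt {c : ℝ} (hne : (T \ S).Nonempty) (hS : c ≤ density v H S)
    (hdiff : density v H (T \ S) < c) (hadd : ∀ f ∈ T \ S, density v H (S ∪ {f}) < c) :
    ((spannedEdges v H T).ncard : ℝ) <
      2 * c * (T \ S).ncard + (spannedEdges v H (T ∩ S)).ncard := by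
  have hsum : ∑ f ∈ (T \ S).toFinite.toFinset,
      ((spannedEdges v H (S ∪ {f}) \ spannedEdges v H S).ncard : ℝ) ≤ (T \ S).ncard * c := by
    rw [Set.ncard_eq_toFinset_card _ (T \ S).toFinite, ← nsmul_eq_mul]
    exact Finset.sum_le_card_nsmul _ _ _ fun f hf =>
      (ncard_spannedEdges_union_singleton_sdiff_lt (by simp at hf; exact hf.2) hS (hadd f (by simpa using hf))).le
  have hcount := ncard_spannedEdges_le (v := v) (H := H) S T
  rify at hcount
  linarith [ncard_spannedEdges_lt_of_density_lt hne hdiff]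

end

variable {α : Type} [Fintype α] [DecidableEq α]

theorem statement17_general (G : SimpleGraph α) (v : α) (H : Set (Sym2 α))
    (ρ : ℝ) (Sstar S : Set (Sym2 α))
    (hSstar : IsStar G v Sstar)
    (hmax : ∀ S' : Set (Sym2 α), IsStar G v S' → density v H S' ≤ density v H Sstar)
    (hSstarρ : ρ / 2 ≤ density v H Sstar)
    (hSρ : ρ / 4 ≤ density v H S) (hnsub : ¬ Sstar ⊆ S) :
    (IsStar G v (Sstar \ S) ∧ ρ / 4 ≤ density v H (Sstar \ S)) ∨
    (∃ e ∈ Sstar \ S, ρ / 4 ≤ density v H (S ∪ {e})) := by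
  by_contra! hcon
  obtain ⟨hdiff, hadd⟩ := hcon
  have hne : (Sstar \ S).Nonempty := Set.not_subset.mp hnsub
  have hdiff_lt := hdiff ⟨hne, fun e he => hSstar.2 e he.1⟩
  have hlt := ncard_spannedEdges_lt hne hSρ hdiff_lt hadd
  have hinter := ncard_spannedEdges_le_of_forall_density_le (T := Sstar ∩ S) hmax
    fun e he => hSstar.2 e he.1
  have hcard : (Sstar.ncard : ℝ) = (Sstar \ S).ncard + (Sstar ∩ S).ncard := by
    rw [← Set.ncard_inter_add_ncard_sdiff_eq_ncard Sstar S]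
    push_cast
    ring
  have hdensity : ((spannedEdges v H Sstar).ncard : ℝ) = density v H Sstar * Sstar.ncard :=
    (div_mul_cancel₀ _ (by exact_mod_cast hSstar.1.ncard_pos.ne')).symm
  have hk : (0 : ℝ) < (Sstar \ S).ncard := by exact_mod_cast hne.ncard_pos
  rw [hcard] at hdensity
  nlinarith [mul_le_mul_of_nonneg_right hSstarρ hk.le]

/-- Let `S*` be a `v`-star of maximum density with respect to `H`, with
`ρ(S*,H) ≥ ρ/2`, and let `S` be a `v`-star with `ρ(S,H) ≥ ρ/4` such that `S* ⊄ S`.  Then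
either the `v`-star `S* \ S` satisfies `ρ(S* \ S, H) ≥ ρ/4`, or there is an edge
`e ∈ S* \ S` with `ρ(S ∪ {e}, H) ≥ ρ/4`. -/
theorem statement17 (G : SimpleGraph α) (v : α) (H : Set (Sym2 α)) (hH : H ⊆ G.edgeSet)
    (ρ : ℝ) (hρ : 0 < ρ) (Sstar S : Set (Sym2 α))
    (hSstar : IsStar G v Sstar)
    (hmax : ∀ S' : Set (Sym2 α), IsStar G v S' → density v H S' ≤ density v H Sstar)
    (hSstarρ : ρ / 2 ≤ density v H Sstar)
    (hS : IsStar G v S) (hSρ : ρ / 4 ≤ density v H S) (hnsub : ¬ Sstar ⊆ S) :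
    (IsStar G v (Sstar \ S) ∧ ρ / 4 ≤ density v H (Sstar \ S)) ∨
    (∃ e ∈ Sstar \ S, ρ / 4 ≤ density v H (S ∪ {e})) :=
  statement17_general G v H ρ Sstar S hSstar hmax hSstarρ hSρ hnsub

end StarStep
end

section
/- Let G be a finite simple graph, k ≥ 1, and let E₁, …, E_t be sets of edges of G that are pairwise at distance at least 2k+1 (i.e., for i ≠ j, every endpoint of an edge of E_i is at graph distance at least 2k+1 in G from every endpoint of an edge of E_j). For a set F of edges, let opt_k(F) denote the minimum size of a set of edges of G that covers every edge of F. Then for every k-spanner H* of G, Σ_{i=1}^{t} opt_k(E_i) ≤ |H*|. -/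
/-!
Let `H*` be a `k`-spanner. For each `i`, the edges of `H*` having an endpoint within
distance `k - 1` of an endpoint of an edge of `E i` already `k`-cover `E i`, since every edge
of a covering path of length at most `k` is that close to the start of the path. An edge lying
in two of these pieces would give a walk of length at most `2k - 1` between endpoints of edges
of distinct `E i`, so the pieces are pairwise disjoint and their sizes add up to at most `|H*|`.
-/

namespace DisjointBalls

variable {α : Type} [Fintype α]

/-- The edge set `H` `k`-covers the edge set `F`: for every edge `{u,w}` of `F` there is
a path of length at most `k` between `u` and `w` consisting of edges of `H`. -/
def Covers (k : ℕ) (H F : Set (Sym2 α)) : Prop :=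
  ∀ u w : α, s(u, w) ∈ F →
    ∃ p : (SimpleGraph.fromEdgeSet H).Walk u w, p.length ≤ k

/-- `opt_k(F)`: the minimum size of a set of edges of `G` that `k`-covers every edge
of `F`. -/
noncomputable def optk (G : SimpleGraph α) (k : ℕ) (F : Set (Sym2 α)) : ℕ :=
  sInf {m : ℕ | ∃ H : Set (Sym2 α), H ⊆ G.edgeSet ∧ Covers k H F ∧ H.ncard = m}

theorem _root_.SimpleGraph.Walk.exists_walk_length_lt_of_mem_edges {V : Type*}
    {G : SimpleGraph V} {u w : V} (p : G.Walk u w) {e : Sym2 V} (he : e ∈ p.edges) :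
    ∃ x ∈ e, ∃ q : G.Walk u x, q.length < p.length := by
  induction p with
  | nil => simp at he
  | @cons a b c hab p ih =>
    rcases List.mem_cons.1 he with rfl | he
    · exact ⟨a, Sym2.mem_mk_left _ _, .nil, by simp⟩
    · obtain ⟨x, hx, q, hq⟩ := ih he
      exact ⟨x, hx, .cons hab q, by simpa using hq⟩

theorem _root_.SimpleGraph.exists_walk_length_le_one_of_mem_edgeSet {V : Type*}
    {G : SimpleGraph V} {e : Sym2 V} (he : e ∈ G.edgeSet) {x y : V} (hx : x ∈ e) (hy : y ∈ e) :
    ∃ r : G.Walk x y, r.length ≤ 1 := by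
  induction e using Sym2.ind with
  | _ a b =>
    have hab : G.Adj a b := he
    rcases Sym2.mem_iff.1 hx with rfl | rfl <;> rcases Sym2.mem_iff.1 hy with rfl | rfl
    exacts [⟨.nil, by simp⟩, ⟨hab.toWalk, by simp⟩, ⟨hab.symm.toWalk, by simp⟩, ⟨.nil, by simp⟩]

def nearEdges {V : Type*} (G : SimpleGraph V) (k : ℕ) (H F : Set (Sym2 V)) : Set (Sym2 V) :=
  {e ∈ H | ∃ f ∈ F, ∃ u ∈ f, ∃ x ∈ e, ∃ q : G.Walk u x, q.length < k}

theorem disjoint_nearEdges {V : Type*} {G : SimpleGraph V} {k : ℕ} {H F F' : Set (Sym2 V)}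
    (hH : H ⊆ G.edgeSet)
    (hsep : ∀ f ∈ F, ∀ f' ∈ F', ∀ x ∈ f, ∀ y ∈ f', ∀ p : G.Walk x y, 2 * k ≤ p.length) :
    Disjoint (nearEdges G k H F) (nearEdges G k H F') := by
  rw [Set.disjoint_left]
  rintro e ⟨heH, f, hf, u, hu, x, hx, q, hq⟩ ⟨-, f', hf', u', hu', x', hx', q', hq'⟩
  obtain ⟨r, hr⟩ := G.exists_walk_length_le_one_of_mem_edgeSet (hH heH) hx hx'
  have := hsep f hf f' hf' u hu u' hu' ((q.append r).append q'.reverse)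
  simp only [SimpleGraph.Walk.length_append, SimpleGraph.Walk.length_reverse] at this
  omega

theorem covers_nearEdges {V : Type} {G : SimpleGraph V} {k : ℕ} {H F : Set (Sym2 V)}
    (hH : H ⊆ G.edgeSet) (hcov : Covers k H F) : Covers k (nearEdges G k H F) F := by
  intro u w huw
  obtain ⟨p, hp⟩ := hcov u w huw
  have hle : SimpleGraph.fromEdgeSet H ≤ G :=
    (G.fromEdgeSet_le).2 (Set.sdiff_subset.trans hH)
  have hnear : ∀ e ∈ p.edges, e ∈ (SimpleGraph.fromEdgeSet (nearEdges G k H F)).edgeSet := by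
    intro e he
    have heH := p.edges_subset_edgeSet he
    rw [SimpleGraph.edgeSet_fromEdgeSet] at heH ⊢
    obtain ⟨x, hx, q, hq⟩ := p.exists_walk_length_lt_of_mem_edges he
    exact ⟨⟨heH.1, s(u, w), huw, u, Sym2.mem_mk_left _ _, x, hx, q.mapLe hle,
      by rw [SimpleGraph.Walk.length_mapLe]; omega⟩, heH.2⟩
  exact ⟨p.transfer _ hnear, by rwa [SimpleGraph.Walk.length_transfer]⟩

theorem optk_le_ncard {V : Type} {G : SimpleGraph V} {k : ℕ} {H F : Set (Sym2 V)}
    (hH : H ⊆ G.edgeSet) (hcov : Covers k H F) : optk G k F ≤ H.ncard :=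
  Nat.sInf_le ⟨H, hH, hcov, rfl⟩

open Function in
theorem _root_.Set.sum_ncard_le_ncard_of_pairwise_disjoint {ι β : Type*} [Fintype ι] [Finite β]
    {s : ι → Set β} {t : Set β} (hs : Pairwise (Disjoint on s)) (hst : ∀ i, s i ⊆ t) :
    ∑ i, (s i).ncard ≤ t.ncard := by
  rw [← finsum_eq_sum_of_fintype, ← Set.ncard_iUnion_of_finite (fun i => Set.toFinite _) hs]
  exact Set.ncard_le_ncard (Set.iUnion_subset hst)

theorem statement18_general (G : SimpleGraph α) (k : ℕ)
    (t : ℕ) (E : Fin t → Set (Sym2 α)) (hE : ∀ i, E i ⊆ G.edgeSet)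
    (hsep : ∀ i j : Fin t, i ≠ j → ∀ e ∈ E i, ∀ f ∈ E j, ∀ x ∈ e, ∀ y ∈ f,
      ∀ p : G.Walk x y, 2 * k + 1 ≤ p.length)
    (Hstar : Set (Sym2 α)) (hsub : Hstar ⊆ G.edgeSet)
    (hspanner : Covers k Hstar G.edgeSet) :
    ∑ i : Fin t, optk G k (E i) ≤ Hstar.ncard := by
  have hnear_sub : ∀ i, nearEdges G k Hstar (E i) ⊆ Hstar := fun i => Set.sep_subset _ _
  calc ∑ i, optk G k (E i) ≤ ∑ i, (nearEdges G k Hstar (E i)).ncard :=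
        Finset.sum_le_sum fun i _ => optk_le_ncard ((hnear_sub i).trans hsub)
          (covers_nearEdges hsub fun u w huw => hspanner u w (hE i huw))
    _ ≤ Hstar.ncard :=
        Set.sum_ncard_le_ncard_of_pairwise_disjoint
          (fun i j hij => disjoint_nearEdges hsub fun e he f hf x hx y hy p =>
            Nat.le_of_succ_le (hsep i j hij e he f hf x hx y hy p))
          hnear_sub

/-- Let `E₁, …, E_t` be sets of edges of `G` that are pairwise at
distance at least `2k+1` (every walk between endpoints of edges in distinct `E_i`'s has
length at least `2k+1`).  Then for every `k`-spanner `H*` of `G`,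
`Σ_i opt_k(E_i) ≤ |H*|`. -/
theorem statement18 (G : SimpleGraph α) (k : ℕ) (hk : 1 ≤ k)
    (t : ℕ) (E : Fin t → Set (Sym2 α)) (hE : ∀ i, E i ⊆ G.edgeSet)
    (hsep : ∀ i j : Fin t, i ≠ j → ∀ e ∈ E i, ∀ f ∈ E j, ∀ x ∈ e, ∀ y ∈ f,
      ∀ p : G.Walk x y, 2 * k + 1 ≤ p.length)
    (Hstar : Set (Sym2 α)) (hsub : Hstar ⊆ G.edgeSet)
    (hspanner : Covers k Hstar G.edgeSet) :
    ∑ i : Fin t, optk G k (E i) ≤ Hstar.ncard :=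
  statement18_general G k t E hE hsep Hstar hsub hspanner

end DisjointBalls
end
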